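/- arXiv:2502.13400 — 6 statements merged into one kernel-verified Lean document; each statement's English description precedes it below -/
import Mathlib

section
/- Let σ, R₀ ∈ (0,+∞), ν ∈ (σ,+∞) and γ, μ, C ∈ (1,+∞). Let V : (0,+∞) → (0,+∞) be a nondecreasing function, and for r ∈ [R₀,+∞) set α(r) := min{1, log(V(r))/log(r)}. Suppose that V(R₀) ≥ μ and that for every r ∈ [R₀,+∞) one has r^σ·α(r)·(V(r))^{(ν-σ)/ν} ≤ C·V(γr). Then there exist c̃ ∈ (0,1), depending only on C, σ, μ, γ, ν and R₀, and R_* ∈ [R₀,+∞), depending only on R₀ and γ, such that for every r ∈ [R_*,+∞) one has V(r) ≥ c̃·r^ν. -/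
open MeasureTheory
open scoped ENNReal NNReal

noncomputable section

/-- The singular kernel `|u x - u y|^p / |x-y|^{n+sp}` as an extended nonnegative real. -/
def interKernel (n : ℕ) (s p : ℝ) (u : EuclideanSpace ℝ (Fin n) → ℝ)
    (x y : EuclideanSpace ℝ (Fin n)) : ℝ≥0∞ :=
  ENNReal.ofReal (|u x - u y| ^ p / ‖x - y‖ ^ ((n : ℝ) + s * p))

/-- The nonlocal interaction energy `K_s^p(u, Ω)`. -/
def Kenergy (n : ℕ) (s p : ℝ) (u : EuclideanSpace ℝ (Fin n) → ℝ)
    (Ω : Set (EuclideanSpace ℝ (Fin n))) : ℝ≥0∞ :=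
  (1 / 2 : ℝ≥0∞) * ∫⁻ x in Ω, ∫⁻ y in Ω, interKernel n s p u x y
    + ∫⁻ x in Ω, ∫⁻ y in Ωᶜ, interKernel n s p u x y

/-- The total energy `E_s^p(u, Ω) = K_s^p(u,Ω) + ∫_Ω W(u)`. -/
def Eenergy (n : ℕ) (s p : ℝ) (W : ℝ → ℝ) (u : EuclideanSpace ℝ (Fin n) → ℝ)
    (Ω : Set (EuclideanSpace ℝ (Fin n))) : ℝ≥0∞ :=
  Kenergy n s p u Ω + ∫⁻ x in Ω, ENNReal.ofReal (W (u x))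

/-- Membership in the admissible class `X^{s,p}(Ω)`. -/
def memX (n : ℕ) (s p : ℝ) (u : EuclideanSpace ℝ (Fin n) → ℝ)
    (Ω : Set (EuclideanSpace ℝ (Fin n))) : Prop :=
  Measurable u ∧ Kenergy n s p u Ω < ⊤ ∧
    ∀ᵐ x ∂(volume : Measure (EuclideanSpace ℝ (Fin n))), |u x| ≤ 1

/-- `u` minimizes `E_s^p(·, Ω)` among competitors in `X^{s,p}(Ω)` agreeing with `u` outside `Ω`. -/
def minimizesOn (n : ℕ) (s p : ℝ) (W : ℝ → ℝ) (u : EuclideanSpace ℝ (Fin n) → ℝ)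
    (Ω : Set (EuclideanSpace ℝ (Fin n))) : Prop :=
  memX n s p u Ω ∧ ∀ v : EuclideanSpace ℝ (Fin n) → ℝ, memX n s p v Ω →
    (∀ x ∉ Ω, v x = u x) → Eenergy n s p W u Ω ≤ Eenergy n s p W v Ω

/-- `u` is a minimizer of `E_s^p` in `Ω` (bounded case directly, unbounded case on all
bounded open subsets compactly contained in `Ω`). -/
def isMinimizerE (n : ℕ) (s p : ℝ) (W : ℝ → ℝ) (u : EuclideanSpace ℝ (Fin n) → ℝ)
    (Ω : Set (EuclideanSpace ℝ (Fin n))) : Prop :=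
  (Bornology.IsBounded Ω → minimizesOn n s p W u Ω) ∧
  (¬ Bornology.IsBounded Ω → ∀ Ω' : Set (EuclideanSpace ℝ (Fin n)),
    IsOpen Ω' → Bornology.IsBounded Ω' → closure Ω' ⊆ Ω → minimizesOn n s p W u Ω')

/-- The `s`-fractional `p`-Laplacian. -/
def fracPLap (n : ℕ) (s p : ℝ) (z : EuclideanSpace ℝ (Fin n) → ℝ)
    (x : EuclideanSpace ℝ (Fin n)) : ℝ :=
  ∫ y, (z x - z y) * |z x - z y| ^ (p - 2) / ‖x - y‖ ^ ((n : ℝ) + s * p)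

/-- The rescaled energy `F_{s,ε}^p(u,Ω)`. -/
def Fenergy (n : ℕ) (s p : ℝ) (W : ℝ → ℝ) (ε : ℝ) (u : EuclideanSpace ℝ (Fin n) → ℝ)
    (Ω : Set (EuclideanSpace ℝ (Fin n))) : ℝ≥0∞ :=
  Kenergy n s p u Ω + ENNReal.ofReal (ε ^ (-(s * p))) * ∫⁻ x in Ω, ENNReal.ofReal (W (u x))

/-- The integer `k = k(s,p)` of the barrier construction. -/
def kbar (p s : ℝ) : ℕ :=
  if p < 2 then (if s < (p - 1) / (2 * p) then 0 else ⌊s * p / (p - 1)⌋₊ + 1) else 1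

/-- `g(t) = t^{-qs}`. -/
def gbar (q s : ℝ) : ℝ → ℝ := fun t => t ^ (-(q * s))

/-- The function `f` of the barrier construction. -/
def fbar (q s r : ℝ) (k : ℕ) : ℝ → ℝ := fun t =>
  gbar q s (r - t) + ∑ i ∈ Finset.range (k + 1),
    ((-1 : ℝ) ^ (i + 1) / (i.factorial : ℝ)) * iteratedDeriv i (gbar q s) (r / 2) * (t - r / 2) ^ i

/-- The barrier profile `h`. -/
def hbar (q s r : ℝ) (k : ℕ) : ℝ → ℝ := fun t =>
  if t ≤ r / 2 then 0 else if t < r then min (fbar q s r k t) 1 else 1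

/-- The radial barrier `v(x) = h(|x|)`. -/
def vbar (n : ℕ) (q s r : ℝ) (k : ℕ) : EuclideanSpace ℝ (Fin n) → ℝ := fun x => hbar q s r k ‖x‖

/-- `c_{q,s,i} = (∏_{j=0}^{i-1} (qs+j)) / i!`. -/
def cQSI (q s : ℝ) (i : ℕ) : ℝ := (∏ j ∈ Finset.range i, (q * s + (j : ℝ))) / (i.factorial : ℝ)

/-- `c̄_{k,q,s} = max { 2^{qs}, 2^{qs} ∑_{i=0}^k c_{q,s,i} }`. -/
def cbar (q s : ℝ) (k : ℕ) : ℝ :=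
  max ((2 : ℝ) ^ (q * s)) ((2 : ℝ) ^ (q * s) * ∑ i ∈ Finset.range (k + 1), cQSI q s i)

end

/-- **The abstract iteration lemma** (Lemma 3.2 of Savin–Valdinoci, recalled as
Lemma 2.1 of the paper).  The constants `c̃` and `R_*` do not depend on `V`. -/
theorem abstract_iteration_lemma
    {σ R₀ ν γ μ C : ℝ} (hσ : 0 < σ) (hR₀ : 0 < R₀) (hν : σ < ν)
    (hγ : 1 < γ) (hμ : 1 < μ) (hC : 1 < C) :
    ∃ ctil Rstar : ℝ, ctil ∈ Set.Ioo (0 : ℝ) 1 ∧ R₀ ≤ Rstar ∧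
      ∀ V : ℝ → ℝ,
        (∀ t : ℝ, 0 < t → 0 < V t) →
        (∀ t₁ t₂ : ℝ, 0 < t₁ → t₁ ≤ t₂ → V t₁ ≤ V t₂) →
        μ ≤ V R₀ →
        (∀ r : ℝ, R₀ ≤ r →
          r ^ σ * min 1 (Real.log (V r) / Real.log r) * V r ^ ((ν - σ) / ν) ≤ C * V (γ * r)) →
        ∀ r : ℝ, Rstar ≤ r → ctil * r ^ ν ≤ V r := by
  have hν0 : (0:ℝ) < ν := hσ.trans hν
  have hγ0 : (0:ℝ) < γ := lt_trans one_pos hγ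
  have hC0 : (0:ℝ) < C := lt_trans one_pos hC
  set τ : ℝ := min σ 1 / 2 with hτdef
  have hτ0 : 0 < τ := by
    rw [hτdef]; have := lt_min hσ one_pos; linarith
  have hτσ : 2 * τ ≤ σ := by
    rw [hτdef]; have := min_le_left σ 1; linarith
  have hτ1 : τ ≤ 1/2 := by
    rw [hτdef]; have := min_le_right σ 1; linarith
  set β : ℝ := (ν - σ)/ν with hβdef
  have hβ0 : 0 < β := div_pos (by linarith) hν0
  have hβ1 : β < 1 := by
    rw [hβdef, div_lt_one hν0]; linarith
  have hβν : β * ν = ν - σ := by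
    rw [hβdef]; field_simp
  have hlogγ : 0 < Real.log γ := Real.log_pos hγ
  have hlogμ : 0 < Real.log μ := Real.log_pos hμ
  -- the little-o bound
  have hστ : 0 < σ - τ := by linarith
  have hlo := isLittleO_log_rpow_atTop hστ
  have hcpos : 0 < Real.log μ / (C * γ ^ τ) := by positivity
  obtain ⟨R₂, hR₂⟩ := Filter.eventually_atTop.mp (hlo.def hcpos)
  set R : ℝ := max (max R₀ μ) (max 3 R₂) with hRdef
  have hR3 : (3:ℝ) ≤ R := le_max_of_le_right (le_max_left _ _)
  have hRR₀ : R₀ ≤ R := le_max_of_le_left (le_max_left _ _)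
  have hRμ : μ ≤ R := le_max_of_le_left (le_max_right _ _)
  have hRR₂ : R₂ ≤ R := le_max_of_le_right (le_max_right _ _)
  have hR1 : (1:ℝ) ≤ R := by linarith
  have hR0 : (0:ℝ) < R := by linarith
  set r₀ : ℝ := γ * R with hr₀def
  have hr₀3 : (3:ℝ) ≤ r₀ := by
    calc (3:ℝ) ≤ R := hR3
    _ = 1 * R := (one_mul R).symm
    _ ≤ γ * R := by gcongr
  have hr₀0 : (0:ℝ) < r₀ := by linarith
  have hr₀1 : (1:ℝ) < r₀ := by linarith
  have hlogr₀ : 0 < Real.log r₀ := Real.log_pos hr₀1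
  -- key log bound for r ≥ R
  have logBound : ∀ r : ℝ, R ≤ r → C * (γ * r) ^ τ * Real.log r ≤ Real.log μ * r ^ σ := by
    intro r hr
    have hr1 : (1:ℝ) ≤ r := hR1.trans hr
    have hr0 : (0:ℝ) < r := by linarith
    have hlog : Real.log r ≤ (Real.log μ / (C * γ ^ τ)) * r ^ (σ - τ) := by
      have h := hR₂ r (hRR₂.trans hr)
      rwa [Real.norm_eq_abs, Real.norm_eq_abs, abs_of_nonneg (Real.log_nonneg hr1),
        abs_of_nonneg (Real.rpow_nonneg hr0.le _)] at h
    have hmul : C * γ ^ τ * r ^ τ * Real.log r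
        ≤ C * γ ^ τ * r ^ τ * ((Real.log μ / (C * γ ^ τ)) * r ^ (σ - τ)) :=
      mul_le_mul_of_nonneg_left hlog (by positivity)
    have heq : C * γ ^ τ * r ^ τ * ((Real.log μ / (C * γ ^ τ)) * r ^ (σ - τ))
        = Real.log μ * (r ^ τ * r ^ (σ - τ)) := by
      field_simp
    have hpow : r ^ τ * r ^ (σ - τ) = r ^ σ := by
      rw [← Real.rpow_add hr0]; ring_nf
    have hgr : (γ * r) ^ τ = γ ^ τ * r ^ τ := Real.mul_rpow hγ0.le hr0.le
    calc C * (γ * r) ^ τ * Real.log r = C * γ ^ τ * r ^ τ * Real.log r := by rw [hgr]; ring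
      _ ≤ _ := hmul
      _ = Real.log μ * r ^ σ := by rw [heq, hpow]
  -- constants for the iteration
  set L : ℝ := Real.log C - Real.log τ with hLdef
  set B : ℝ := L + ν * Real.log γ with hBdef
  set m : ℝ := min ((τ - ν) * Real.log r₀) (-B / (1 - β)) with hmdef
  have hRr₀ : R ≤ r₀ := le_mul_of_one_le_left hR0.le hγ.le
  refine ⟨min (Real.exp m / γ ^ ν) (1/2), r₀, ⟨lt_min (by positivity) (by norm_num),
    lt_of_le_of_lt (min_le_right _ _) (by norm_num)⟩, hRR₀.trans hRr₀, ?_⟩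
  intro V hVpos hVmono hVμ hyp
  -- V r ≥ μ for r ≥ R₀
  have hVge : ∀ r : ℝ, R₀ ≤ r → μ ≤ V r := fun r hr =>
    hVμ.trans (hVmono R₀ r hR₀ hr)
  -- Claim A : V r ≥ r^τ for r ≥ r₀
  have claimA : ∀ r : ℝ, r₀ ≤ r → r ^ τ ≤ V r := by
    intro r hr
    have hrpos : (0:ℝ) < r := hr₀0.trans_le hr
    have hs0 : 0 < r / γ := by positivity
    have hsR : R ≤ r / γ := (le_div_iff₀ hγ0).2 (by rw [hr₀def] at hr; linarith [mul_comm γ R])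
    set s : ℝ := r / γ with hsdef
    have hrs : r = γ * s := by rw [hsdef]; field_simp
    have hs1 : (1:ℝ) < s := lt_of_lt_of_le (by linarith) hsR
    have hlogs : 0 < Real.log s := Real.log_pos hs1
    have hVs : μ ≤ V s := hVge s (hRR₀.trans hsR)
    have hVs0 : 0 < V s := hVpos s hs0
    have hα : Real.log μ / Real.log s ≤ min 1 (Real.log (V s) / Real.log s) := by
      refine le_min ?_ ?_
      · rw [div_le_one hlogs]
        exact Real.log_le_log (by linarith) (hRμ.trans hsR)
      · gcongr
    have hVβ : 1 ≤ V s ^ β := by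
      calc (1:ℝ) = V s ^ (0:ℝ) := (Real.rpow_zero _).symm
        _ ≤ V s ^ β := Real.rpow_le_rpow_of_exponent_le (by linarith) hβ0.le
    have hmin0 : 0 ≤ min 1 (Real.log (V s) / Real.log s) :=
      le_min zero_le_one (div_nonneg (Real.log_nonneg (by linarith)) hlogs.le)
    have h1 : s ^ σ * (Real.log μ / Real.log s) * 1 ≤
        s ^ σ * min 1 (Real.log (V s) / Real.log s) * V s ^ β :=
      mul_le_mul (mul_le_mul_of_nonneg_left hα (by positivity)) hVβ zero_le_one
        (mul_nonneg (by positivity) hmin0)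
    have h2 := hyp s (hRR₀.trans hsR)
    have h3 : C * (γ * s) ^ τ ≤ s ^ σ * (Real.log μ / Real.log s) := by
      calc C * (γ * s) ^ τ ≤ Real.log μ * s ^ σ / Real.log s :=
            (le_div_iff₀ hlogs).2 (logBound s hsR)
        _ = s ^ σ * (Real.log μ / Real.log s) := by ring
    have h4 : C * (γ * s) ^ τ ≤ C * V (γ * s) := by
      calc C * (γ * s) ^ τ ≤ s ^ σ * (Real.log μ / Real.log s) := h3
        _ = s ^ σ * (Real.log μ / Real.log s) * 1 := by ring
        _ ≤ _ := h1
        _ ≤ C * V (γ * s) := h2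
    have := (mul_le_mul_iff_right₀ hC0).1 h4
    rwa [← hrs] at this
  -- Claim B : recursion
  have recB : ∀ r : ℝ, r₀ ≤ r → τ / C * (r ^ σ * V r ^ β) ≤ V (γ * r) := by
    intro r hr
    have hr0 : (0:ℝ) < r := hr₀0.trans_le hr
    have hr1 : (1:ℝ) < r := hr₀1.trans_le hr
    have hlogr : 0 < Real.log r := Real.log_pos hr1
    have hVr0 : 0 < V r := hVpos r hr0
    have hα : τ ≤ min 1 (Real.log (V r) / Real.log r) := by
      refine le_min (by linarith) ?_
      rw [le_div_iff₀ hlogr]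
      calc τ * Real.log r = Real.log (r ^ τ) := (Real.log_rpow hr0 τ).symm
        _ ≤ Real.log (V r) := Real.log_le_log (by positivity) (claimA r hr)
    have h1 : r ^ σ * τ * V r ^ β ≤ r ^ σ * min 1 (Real.log (V r) / Real.log r) * V r ^ β :=
      mul_le_mul_of_nonneg_right (mul_le_mul_of_nonneg_left hα (by positivity))
        (by positivity)
    have h2 := hyp r (hRR₀.trans (hRr₀.trans hr))
    have h3 : r ^ σ * τ * V r ^ β ≤ C * V (γ * r) := h1.trans h2
    rw [div_mul_eq_mul_div, div_le_iff₀ hC0]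
    calc τ * (r ^ σ * V r ^ β) = r ^ σ * τ * V r ^ β := by ring
      _ ≤ C * V (γ * r) := h3
      _ = V (γ * r) * C := by ring
  -- Claim C : induction along r_k = γ^k * r₀
  have claimC : ∀ k : ℕ, ν * Real.log (γ ^ k * r₀) + m ≤ Real.log (V (γ ^ k * r₀)) := by
    intro k
    induction k with
    | zero =>
      simp only [pow_zero, one_mul]
      have h1 : τ * Real.log r₀ ≤ Real.log (V r₀) := by
        calc τ * Real.log r₀ = Real.log (r₀ ^ τ) := (Real.log_rpow hr₀0 τ).symm
          _ ≤ Real.log (V r₀) := Real.log_le_log (by positivity) (claimA r₀ le_rfl)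
      have h2 : m ≤ (τ - ν) * Real.log r₀ := min_le_left _ _
      linarith
    | succ k ih =>
      set x : ℝ := γ ^ k * r₀ with hxdef
      have hx0 : 0 < x := by positivity
      have hxr₀ : r₀ ≤ x := by
        calc r₀ = 1 * r₀ := (one_mul r₀).symm
          _ ≤ γ ^ k * r₀ := by gcongr; exact one_le_pow₀ hγ.le
      have hVx0 : 0 < V x := hVpos x hx0
      have hsucc : γ ^ (k+1) * r₀ = γ * x := by rw [hxdef, pow_succ]; ring
      rw [hsucc]
      have hrec := recB x hxr₀
      have hlhs0 : 0 < τ / C * (x ^ σ * V x ^ β) := by positivity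
      have h1 : Real.log (τ / C * (x ^ σ * V x ^ β)) ≤ Real.log (V (γ * x)) :=
        Real.log_le_log hlhs0 hrec
      have h2 : Real.log (τ / C * (x ^ σ * V x ^ β))
          = (Real.log τ - Real.log C) + (σ * Real.log x + β * Real.log (V x)) := by
        rw [Real.log_mul (by positivity) (by positivity),
          Real.log_mul (by positivity) (by positivity),
          Real.log_div (by positivity) (by positivity),
          Real.log_rpow hx0, Real.log_rpow hVx0]
      have h3 : Real.log (γ * x) = Real.log γ + Real.log x :=
        Real.log_mul (by positivity) (by positivity)
      have h4 : β * (ν * Real.log x + m) ≤ β * Real.log (V x) :=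
        mul_le_mul_of_nonneg_left ih hβ0.le
      have h5 : m ≤ -B / (1 - β) := min_le_right _ _
      have h6 : m * (1 - β) ≤ -B := (le_div_iff₀ (by linarith)).1 h5
      have h4' : β * ν * Real.log x + β * m ≤ β * Real.log (V x) := by
        rw [show β * ν * Real.log x + β * m = β * (ν * Real.log x + m) from by ring]
        exact h4
      rw [hβν] at h4'
      have h6' : m - β * m ≤ -B := by
        rw [show m - β * m = m * (1 - β) from by ring]
        exact h6
      rw [h3]
      rw [h2] at h1
      linarith [h1, h4', h6', hBdef, hLdef]
  -- Conclusion
  intro r hr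
  have hr0 : (0:ℝ) < r := by linarith
  have hrr₀1 : (1:ℝ) ≤ r / r₀ := (one_le_div hr₀0).2 hr
  have hx0 : 0 ≤ Real.log (r / r₀) / Real.log γ :=
    div_nonneg (Real.log_nonneg hrr₀1) hlogγ.le
  set k : ℕ := ⌊Real.log (r / r₀) / Real.log γ⌋₊ with hkdef
  set x : ℝ := γ ^ k * r₀ with hxdef
  have hx0' : 0 < x := by positivity
  have hxler : x ≤ r := by
    have hk1 : (k:ℝ) ≤ Real.log (r / r₀) / Real.log γ := Nat.floor_le hx0
    have : (k:ℝ) * Real.log γ ≤ Real.log (r / r₀) := (le_div_iff₀ hlogγ).1 hk1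
    have hlog : Real.log (γ ^ k) ≤ Real.log (r / r₀) := by
      rwa [Real.log_pow]
    have : (γ:ℝ) ^ k ≤ r / r₀ :=
      (Real.log_le_log_iff (by positivity) (by positivity)).1 hlog
    calc x = γ ^ k * r₀ := hxdef
      _ ≤ (r / r₀) * r₀ := by gcongr
      _ = r := by field_simp
  have hrlex : r ≤ γ * x := by
    have hk2 : Real.log (r / r₀) / Real.log γ < (k:ℝ) + 1 := Nat.lt_floor_add_one _
    have h1 : Real.log (r / r₀) < ((k:ℝ) + 1) * Real.log γ := by
      rw [div_lt_iff₀ hlogγ] at hk2; linarith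
    have h2 : Real.log (r / r₀) < Real.log (γ ^ (k+1)) := by
      rw [Real.log_pow]; push_cast; linarith
    have h3 : r / r₀ < γ ^ (k+1) :=
      (Real.log_lt_log_iff (by positivity) (by positivity)).1 h2
    have : r < γ ^ (k+1) * r₀ := (div_lt_iff₀ hr₀0).1 h3
    calc r ≤ γ ^ (k+1) * r₀ := this.le
      _ = γ * x := by rw [hxdef, pow_succ]; ring
  have hlogVx := claimC k
  rw [← hxdef] at hlogVx
  have hVx0 : 0 < V x := hVpos x hx0'
  have hVxge : Real.exp m * x ^ ν ≤ V x := by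
    have : Real.exp (ν * Real.log x + m) ≤ Real.exp (Real.log (V x)) :=
      Real.exp_le_exp.2 hlogVx
    rw [Real.exp_log hVx0] at this
    have heq : Real.exp m * x ^ ν = Real.exp (ν * Real.log x + m) := by
      rw [Real.exp_add, Real.rpow_def_of_pos hx0', mul_comm (Real.log x) ν]
      ring
    rw [heq]
    exact this
  have hVr : V x ≤ V r := hVmono x r hx0' hxler
  have hxge : r / γ ≤ x := by
    rw [div_le_iff₀ hγ0]; linarith [mul_comm γ x]
  have hpow : (r / γ) ^ ν ≤ x ^ ν := Real.rpow_le_rpow (by positivity) hxge hν0.le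
  have hdiv : (r / γ) ^ ν = r ^ ν / γ ^ ν := Real.div_rpow hr0.le hγ0.le _
  calc min (Real.exp m / γ ^ ν) (1/2) * r ^ ν
      ≤ (Real.exp m / γ ^ ν) * r ^ ν := by
        gcongr
        exact min_le_left _ _
    _ = Real.exp m * (r ^ ν / γ ^ ν) := by ring
    _ = Real.exp m * (r / γ) ^ ν := by rw [hdiv]
    _ ≤ Real.exp m * x ^ ν := by gcongr
    _ ≤ V x := hVxge
    _ ≤ V r := hVr
end

section
/- Let s ∈ (0,1), p ∈ (1,+∞), m ∈ [p,+∞), q := p/(m-1), r ∈ [1,+∞), and let h : (0,+∞) → [0,1] be the barrier profile associated with these parameters. Then there exists c̄_{k,q,s} ∈ (1,+∞), depending only on k, q and s, such that for every t ∈ (0,r) one has min{1, (r−t)^{−ps}} ≤ (h(t) + c̄_{k,q,s}·r^{−qs})^{m−1}. -/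
open MeasureTheory
open scoped ENNReal NNReal

lemma iteratedDeriv_rpow_neg (a : ℝ) (i : ℕ) :
    ∀ x : ℝ, 0 < x → iteratedDeriv i (fun t : ℝ => t ^ (-a)) x
      = (-1 : ℝ) ^ i * (∏ j ∈ Finset.range i, (a + (j : ℝ))) * x ^ (-a - i) := by
  induction i with
  | zero => intro x hx; simp
  | succ i ih =>
    intro x hx
    rw [iteratedDeriv_succ]
    have hev : iteratedDeriv i (fun t : ℝ => t ^ (-a)) =ᶠ[nhds x]
        fun y => (-1 : ℝ) ^ i * (∏ j ∈ Finset.range i, (a + (j : ℝ))) * y ^ (-a - i) := by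
      filter_upwards [eventually_gt_nhds hx] with y hy using ih y hy
    rw [hev.deriv_eq]
    have hd : HasDerivAt (fun y : ℝ => (-1 : ℝ) ^ i * (∏ j ∈ Finset.range i, (a + (j : ℝ))) * y ^ (-a - i))
        ((-1 : ℝ) ^ i * (∏ j ∈ Finset.range i, (a + (j : ℝ))) * ((-a - i) * x ^ (-a - i - 1))) x :=
      (Real.hasDerivAt_rpow_const (Or.inl hx.ne')).const_mul _
    rw [hd.deriv, Finset.prod_range_succ]
    have he : -a - (i : ℝ) - 1 = -a - ((i + 1 : ℕ) : ℝ) := by push_cast; ring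
    rw [he]
    ring

lemma cQSI_nonneg {q s : ℝ} (hq : 0 < q) (hs : 0 < s) (i : ℕ) : 0 ≤ cQSI q s i := by
  have h1 : (0:ℝ) ≤ ∏ j ∈ Finset.range i, (q * s + (j : ℝ)) :=
    Finset.prod_nonneg fun j _ => by positivity
  have h2 : (0:ℝ) < (i.factorial : ℝ) := by exact_mod_cast i.factorial_pos
  exact div_nonneg h1 h2.le

lemma key_ineq {q s : ℝ} (hq : 0 < q) (hs : 0 < s) (k : ℕ) :
    ∀ r : ℝ, 1 ≤ r → ∀ t ∈ Set.Ioo (0 : ℝ) r,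
      min 1 ((r - t) ^ (-(q * s))) ≤ hbar q s r k t + cbar q s k * r ^ (-(q * s)) := by
  intro r hr t ht
  obtain ⟨ht0, htr⟩ := ht
  have hr0 : (0:ℝ) < r := lt_of_lt_of_le one_pos hr
  have hrt : (0:ℝ) < r - t := by linarith
  have ha : (0:ℝ) < q * s := mul_pos hq hs
  have hra : (0:ℝ) < r ^ (-(q * s)) := Real.rpow_pos_of_pos hr0 _
  have hr2 : (0:ℝ) < r / 2 := by linarith
  have hhalf : (r / 2 : ℝ) ^ (-(q * s)) = (2:ℝ) ^ (q * s) * r ^ (-(q * s)) := by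
    rw [Real.div_rpow hr0.le (by norm_num), Real.rpow_neg (by norm_num : (0:ℝ) ≤ 2)]
    field_simp
  have hc2 : (2:ℝ) ^ (q * s) ≤ cbar q s k := le_max_left _ _
  unfold hbar
  by_cases hle : t ≤ r / 2
  · rw [if_pos hle]
    have h1 : (r - t) ^ (-(q * s)) ≤ (r / 2) ^ (-(q * s)) :=
      Real.rpow_le_rpow_of_nonpos hr2 (by linarith) (by linarith)
    calc min 1 ((r - t) ^ (-(q * s))) ≤ (r - t) ^ (-(q * s)) := min_le_right _ _
      _ ≤ (r / 2) ^ (-(q * s)) := h1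
      _ = (2:ℝ) ^ (q * s) * r ^ (-(q * s)) := hhalf
      _ ≤ cbar q s k * r ^ (-(q * s)) := by
          exact mul_le_mul_of_nonneg_right hc2 hra.le
      _ = 0 + cbar q s k * r ^ (-(q * s)) := by ring
  · rw [if_neg hle, if_pos htr]
    push_neg at hle
    -- core bound: fbar t + c r^{-qs} ≥ (r-t)^{-qs}
    have hfb : (r - t) ^ (-(q * s)) ≤ fbar q s r k t + cbar q s k * r ^ (-(q * s)) := by
      unfold fbar
      have hterm : ∀ i ∈ Finset.range (k + 1),
          ((-1 : ℝ) ^ (i + 1) / (i.factorial : ℝ)) * iteratedDeriv i (gbar q s) (r / 2)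
            * (t - r / 2) ^ i
          = -(cQSI q s i * ((r / 2) ^ (-(q * s) - (i:ℝ)) * (t - r / 2) ^ i)) := by
        intro i _
        rw [show gbar q s = fun t : ℝ => t ^ (-(q * s)) from rfl,
          iteratedDeriv_rpow_neg (q * s) i (r / 2) hr2, cQSI]
        have hs1 : ((-1:ℝ)) ^ (i + 1) * (-1:ℝ) ^ i = -1 := by
          rw [← pow_add]; exact Odd.neg_one_pow ⟨i, by ring⟩
        linear_combination ((∏ j ∈ Finset.range i, (q * s + (j:ℝ))) / (i.factorial : ℝ)
          * (r / 2) ^ (-(q * s) - (i:ℝ)) * (t - r / 2) ^ i) * hs1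
      have hsum : ∑ i ∈ Finset.range (k + 1),
          ((-1 : ℝ) ^ (i + 1) / (i.factorial : ℝ)) * iteratedDeriv i (gbar q s) (r / 2)
            * (t - r / 2) ^ i
          = -∑ i ∈ Finset.range (k + 1),
              cQSI q s i * ((r / 2) ^ (-(q * s) - (i:ℝ)) * (t - r / 2) ^ i) := by
        rw [← Finset.sum_neg_distrib]
        exact Finset.sum_congr rfl hterm
      have hbound : ∑ i ∈ Finset.range (k + 1),
            cQSI q s i * ((r / 2) ^ (-(q * s) - (i:ℝ)) * (t - r / 2) ^ i)
          ≤ cbar q s k * r ^ (-(q * s)) := by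
        have hstep : ∀ i ∈ Finset.range (k + 1),
            cQSI q s i * ((r / 2) ^ (-(q * s) - (i:ℝ)) * (t - r / 2) ^ i)
            ≤ cQSI q s i * (r / 2) ^ (-(q * s)) := by
          intro i _
          refine mul_le_mul_of_nonneg_left ?_ (cQSI_nonneg hq hs i)
          have h1 : (t - r / 2) ^ i ≤ (r / 2) ^ i :=
            pow_le_pow_left₀ (by linarith) (by linarith) i
          have h2 : (r / 2) ^ (-(q * s) - (i:ℝ)) * (r / 2) ^ i = (r / 2) ^ (-(q * s)) := by
            rw [← Real.rpow_natCast (r / 2) i, ← Real.rpow_add hr2]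
            norm_num
          calc (r / 2) ^ (-(q * s) - (i:ℝ)) * (t - r / 2) ^ i
              ≤ (r / 2) ^ (-(q * s) - (i:ℝ)) * (r / 2) ^ i :=
                mul_le_mul_of_nonneg_left h1 (Real.rpow_pos_of_pos hr2 _).le
            _ = (r / 2) ^ (-(q * s)) := h2
        calc ∑ i ∈ Finset.range (k + 1),
              cQSI q s i * ((r / 2) ^ (-(q * s) - (i:ℝ)) * (t - r / 2) ^ i)
            ≤ ∑ i ∈ Finset.range (k + 1), cQSI q s i * (r / 2) ^ (-(q * s)) :=
              Finset.sum_le_sum hstep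
          _ = (∑ i ∈ Finset.range (k + 1), cQSI q s i) * ((2:ℝ) ^ (q * s) * r ^ (-(q * s))) := by
              rw [← Finset.sum_mul, hhalf]
          _ = ((2:ℝ) ^ (q * s) * ∑ i ∈ Finset.range (k + 1), cQSI q s i) * r ^ (-(q * s)) := by
              ring
          _ ≤ cbar q s k * r ^ (-(q * s)) :=
              mul_le_mul_of_nonneg_right (le_max_right _ _) hra.le
      have hg : gbar q s (r - t) = (r - t) ^ (-(q * s)) := rfl
      rw [hg, hsum]
      linarith
    rcases le_total (fbar q s r k t) 1 with hf1 | hf1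
    · rw [min_eq_left hf1]
      calc min 1 ((r - t) ^ (-(q * s))) ≤ (r - t) ^ (-(q * s)) := min_le_right _ _
        _ ≤ fbar q s r k t + cbar q s k * r ^ (-(q * s)) := hfb
    · rw [min_eq_right hf1]
      have : (0:ℝ) ≤ cbar q s k * r ^ (-(q * s)) := by
        have : (0:ℝ) < (2:ℝ) ^ (q * s) := Real.rpow_pos_of_pos (by norm_num) _
        nlinarith
      calc min 1 ((r - t) ^ (-(q * s))) ≤ 1 := min_le_left _ _
        _ ≤ 1 + cbar q s k * r ^ (-(q * s)) := by linarith

/-- **Lower bound for the barrier profile** (Proposition 3.2 of the paper).  There is a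
constant `c̄ ∈ (1,∞)`, depending only on `k`, `q` and `s` (in particular not on `r`),
such that `min{1, (r-t)^{-ps}} ≤ (h(t) + c̄ r^{-qs})^{m-1}` for every `t ∈ (0,r)`. -/
theorem barrier_profile_lower_bound
    {s p m : ℝ} (hs : s ∈ Set.Ioo (0 : ℝ) 1) (hp : 1 < p) (hm : p ≤ m) :
    ∃ c : ℝ, 1 < c ∧
      ∀ r : ℝ, 1 ≤ r → ∀ t ∈ Set.Ioo (0 : ℝ) r,
        min 1 ((r - t) ^ (-(p * s))) ≤
          (hbar (p / (m - 1)) s r (kbar p s) t + c * r ^ (-((p / (m - 1)) * s))) ^ (m - 1) := by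
  obtain ⟨hs0, hs1⟩ := hs
  have hm1 : (0:ℝ) < m - 1 := by linarith
  set q := p / (m - 1) with hqdef
  clear_value q
  have hq : 0 < q := by rw [hqdef]; exact div_pos (by linarith) hm1
  refine ⟨cbar q s (kbar p s), ?_, ?_⟩
  · have h2 : (1:ℝ) < (2:ℝ) ^ (q * s) :=
      (Real.one_lt_rpow_iff_of_pos (by norm_num)).mpr
        (Or.inl ⟨one_lt_two, mul_pos hq hs0⟩)
    exact lt_of_lt_of_le h2 (le_max_left _ _)
  · intro r hr t ht
    have hrt : (0:ℝ) < r - t := by linarith [ht.2]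
    have hmin := key_ineq hq hs0 (kbar p s) r hr t ht
    have hy : (0:ℝ) < (r - t) ^ (-(q * s)) := Real.rpow_pos_of_pos hrt _
    have hminpos : 0 < min 1 ((r - t) ^ (-(q * s))) := lt_min one_pos hy
    have hxpow := Real.rpow_le_rpow hminpos.le hmin hm1.le
    have hqm : q * (m - 1) = p := by rw [hqdef]; exact div_mul_cancel₀ p hm1.ne'
    have hps : -(p * s) = (-(q * s)) * (m - 1) := by linear_combination s * hqm
    have hy2 : (r - t) ^ (-(p * s)) = ((r - t) ^ (-(q * s))) ^ (m - 1) := by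
      rw [hps, Real.rpow_mul hrt.le]
    rcases le_total ((r - t) ^ (-(q * s))) 1 with h1 | h1
    · rw [min_eq_right h1] at hxpow
      have h2 : (r - t) ^ (-(p * s)) ≤ (hbar q s r (kbar p s) t
          + cbar q s (kbar p s) * r ^ (-(q * s))) ^ (m - 1) := by
        rw [hy2]; exact hxpow
      exact le_trans (min_le_right _ _) h2
    · rw [min_eq_left h1, Real.one_rpow] at hxpow
      exact le_trans (min_le_left _ _) hxpow
end

section
/- Let p ∈ (1,+∞), m ∈ [p,+∞) and q := p/(m-1). Define c_{p,m}^{(1)} := (⌊p/(p-1)⌋+2)·∏_{j=1}^{⌊p/(p-1)⌋+1}(p/(m-1)+j) and ĉ_{p,m} := 2·e^{c_{p,m}^{(1)}}. Then for every s ∈ (0,1) one has (c̄_{k,q,s})^{1/(qs)} ≤ ĉ_{p,m}, where c̄_{k,q,s} := max{2^{qs}, 2^{qs}·Σ_{i=0}^{k} c_{q,s,i}} with c_{q,s,i} := (∏_{j=0}^{i-1}(qs+j))/i!. -/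
open MeasureTheory
open scoped ENNReal NNReal

/-
Write `t = q s ∈ (0, q)`. Since `c_{q,s,0} = 1` and, for `1 ≤ i ≤ k ≤ ⌊p/(p-1)⌋ + 1`,
`c_{q,s,i} ≤ t (t+1) ⋯ (t+i-1) ≤ t ∏_{j=1}^{⌊p/(p-1)⌋+1} (q+j)`, the sum in `c̄_{k,q,s}` is at most
`1 + t c^{(1)}_{p,m} ≤ e^{t c^{(1)}_{p,m}}`. Hence `c̄_{k,q,s} ≤ (2 e^{c^{(1)}_{p,m}})^t`, and taking
the `t`-th root removes the dependence on `s`.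
-/

open Finset Real

lemma kbar_le_floor_add_one {p s : ℝ} (hp : 1 < p) (hs : s ≤ 1) :
    kbar p s ≤ ⌊p / (p - 1)⌋₊ + 1 := by
  unfold kbar
  split_ifs
  · exact Nat.zero_le _
  · gcongr
    nlinarith
  · omega

lemma cQSI_zero (q s : ℝ) : cQSI q s 0 = 1 := by
  simp [cQSI]

lemma cQSI_le_prod {q s : ℝ} (hqs : 0 ≤ q * s) (i : ℕ) :
    cQSI q s i ≤ ∏ j ∈ range i, (q * s + j) :=
  div_le_self (prod_nonneg fun _ _ => by positivity)
    (by exact_mod_cast i.factorial_pos)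

lemma prod_range_succ_add_le {t a : ℝ} (ht : 0 ≤ t) (hta : t ≤ a) {i N : ℕ} (hiN : i ≤ N) :
    ∏ j ∈ range (i + 1), (t + j) ≤ t * ∏ j ∈ Icc 1 N, (a + j) := by
  rw [prod_range_eq_mul_Ico _ (by positivity), Ico_add_one_right_eq_Icc, Nat.cast_zero, add_zero]
  have ha : 0 ≤ a := ht.trans hta
  gcongr ?_ * ?_
  calc ∏ j ∈ Icc 1 i, (t + j) ≤ ∏ j ∈ Icc 1 i, (a + j) := by gcongr
    _ ≤ ∏ j ∈ Icc 1 N, (a + j) :=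
      prod_le_prod_of_subset_of_one_le (Icc_subset_Icc le_rfl hiN)
        (fun j _ => by positivity) fun j hj _ => by
          have : (1 : ℝ) ≤ j := by exact_mod_cast (mem_Icc.mp hj).1
          linarith

lemma sum_range_succ_cQSI_le {q s : ℝ} (hq : 0 ≤ q) (hs0 : 0 ≤ s) (hs1 : s ≤ 1) {k N : ℕ}
    (hk : k ≤ N) :
    ∑ i ∈ range (k + 1), cQSI q s i ≤ 1 + k * (q * s * ∏ j ∈ Icc 1 N, (q + j)) := by
  have hqs : 0 ≤ q * s := mul_nonneg hq hs0
  rw [sum_range_succ', cQSI_zero, add_comm]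
  gcongr
  calc ∑ i ∈ range k, cQSI q s (i + 1)
      ≤ ∑ _i ∈ range k, q * s * ∏ j ∈ Icc 1 N, (q + j) := by
        refine sum_le_sum fun i hi => (cQSI_le_prod hqs _).trans ?_
        exact prod_range_succ_add_le hqs (mul_le_of_le_one_right hq hs1)
          ((mem_range.mp hi).le.trans hk)
    _ = k * (q * s * ∏ j ∈ Icc 1 N, (q + j)) := by
        rw [sum_const, card_range, nsmul_eq_mul]

lemma cbar_rpow_inv_le {q s C : ℝ} {k : ℕ} (hqs : 0 < q * s) (hC : 0 ≤ C)
    (hsum : ∑ i ∈ range (k + 1), cQSI q s i ≤ exp (q * s * C)) :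
    cbar q s k ^ (1 / (q * s)) ≤ 2 * exp C := by
  have hmax : max 1 (∑ i ∈ range (k + 1), cQSI q s i) ≤ exp (q * s * C) :=
    max_le (one_le_exp (by positivity)) hsum
  calc cbar q s k ^ (1 / (q * s))
      = ((2 : ℝ) ^ (q * s) * max 1 (∑ i ∈ range (k + 1), cQSI q s i)) ^ (1 / (q * s)) := by
        rw [cbar, mul_max_of_nonneg _ _ (by positivity), mul_one]
    _ ≤ ((2 : ℝ) ^ (q * s) * exp (q * s * C)) ^ (1 / (q * s)) := by gcongr
    _ = 2 * exp C := by
        rw [mul_comm (q * s) C, exp_mul, ← mul_rpow (by norm_num) (exp_pos C).le, one_div,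
          rpow_rpow_inv (by positivity) hqs.ne']

/-- **Uniform bound in `s`** (Lemma 3.3 of the paper):
`(c̄_{k,q,s})^{1/(qs)} ≤ ĉ_{p,m} = 2 e^{c^{(1)}_{p,m}}` for every `s ∈ (0,1)`. -/
theorem cbar_uniform_bound
    {p m : ℝ} (hp : 1 < p) (hm : p ≤ m) :
    ∀ s ∈ Set.Ioo (0 : ℝ) 1,
      cbar (p / (m - 1)) s (kbar p s) ^ (1 / ((p / (m - 1)) * s)) ≤
        2 * Real.exp (((⌊p / (p - 1)⌋₊ : ℝ) + 2) *
          ∏ j ∈ Finset.Icc 1 (⌊p / (p - 1)⌋₊ + 1), (p / (m - 1) + (j : ℝ))) := by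
  rintro s ⟨hs0, hs1⟩
  set q := p / (m - 1)
  set K := ⌊p / (p - 1)⌋₊
  set P := ∏ j ∈ Icc 1 (K + 1), (q + (j : ℝ))
  have hq : 0 < q := div_pos (by linarith) (by linarith)
  have hqs : 0 < q * s := mul_pos hq hs0
  have hP : 0 ≤ P := prod_nonneg fun j _ => by positivity
  have hk : kbar p s ≤ K + 1 := kbar_le_floor_add_one hp hs1.le
  refine cbar_rpow_inv_le hqs (by positivity) ?_
  calc ∑ i ∈ range (kbar p s + 1), cQSI q s i ≤ 1 + kbar p s * (q * s * P) :=
        sum_range_succ_cQSI_le hq.le hs0.le hs1.le hk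
    _ ≤ 1 + q * s * ((K + 2) * P) := by
        have : (kbar p s : ℝ) ≤ K + 2 := by exact_mod_cast hk.trans (by omega)
        nlinarith [mul_nonneg hqs.le hP]
    _ ≤ exp (q * s * ((K + 2) * P)) := by linarith [add_one_le_exp (q * s * ((K + 2) * P))]
end

section
/- Let n ∈ ℕ, ρ ∈ (0,+∞), p ∈ (1,+∞), s ∈ (0,(p-1)/p) and ψ ∈ L^∞(ℝ^n). Let x ∈ ℝ^n and assume that there exists K̂ ∈ (0,+∞) such that |ψ(y) − ψ(x)| ≤ K̂·|y − x| for every y ∈ B_ρ(x). Then there exists c_{n,p} ∈ (0,+∞), depending only on n and p, such that |(−Δ)_p^s ψ(x)| ≤ (c_{n,p}/(s(p−1−sp)))·(K̂^{p−1}·ρ^{−sp+p−1} + ‖ψ‖_{L^∞(ℝ^n)}^{p−1}·ρ^{−sp}). -/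
open MeasureTheory
open scoped ENNReal NNReal

open MeasureTheory Metric Set


section FracAux

private lemma aux_texp {t : ℝ} (ht : 0 < t) : t * Real.exp (-t) ≤ 1 - Real.exp (-t) := by
  have h1 := Real.add_one_le_exp t
  have h2 : Real.exp (-t) * Real.exp t = 1 := by rw [← Real.exp_add]; simp
  nlinarith [Real.exp_pos t, Real.exp_pos (-t)]

private lemma aux_inv_geom {α : ℝ} (hα : 0 < α) :
    (1 - ENNReal.ofReal ((2:ℝ) ^ (-α)))⁻¹
      ≤ ENNReal.ofReal ((2:ℝ) ^ α / (α * Real.log 2)) := by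
  have hL2 : 0 < Real.log 2 := Real.log_pos one_lt_two
  have htpos : 0 < α * Real.log 2 := mul_pos hα hL2
  have h2 : (2:ℝ) ^ (-α) = Real.exp (-(α * Real.log 2)) := by
    rw [Real.rpow_def_of_pos (by norm_num : (0:ℝ) < 2)]
    ring_nf
  have key : (α * Real.log 2) * (2:ℝ) ^ (-α) ≤ 1 - (2:ℝ) ^ (-α) := by
    rw [h2]; exact aux_texp htpos
  have hpos : 0 < (α * Real.log 2) * (2:ℝ) ^ (-α) :=
    mul_pos htpos (Real.rpow_pos_of_pos (by norm_num) _)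
  calc (1 - ENNReal.ofReal ((2:ℝ) ^ (-α)))⁻¹
      = (ENNReal.ofReal (1 - (2:ℝ) ^ (-α)))⁻¹ := by
        rw [ENNReal.ofReal_sub _ (Real.rpow_nonneg (by norm_num) _), ENNReal.ofReal_one]
    _ ≤ (ENNReal.ofReal ((α * Real.log 2) * (2:ℝ) ^ (-α)))⁻¹ :=
        ENNReal.inv_le_inv' (ENNReal.ofReal_le_ofReal key)
    _ = ENNReal.ofReal (((α * Real.log 2) * (2:ℝ) ^ (-α))⁻¹) :=
        (ENNReal.ofReal_inv_of_pos hpos).symm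
    _ = ENNReal.ofReal ((2:ℝ) ^ α / (α * Real.log 2)) := by
        rw [mul_inv, Real.rpow_neg (by norm_num : (0:ℝ) ≤ 2), inv_inv]
        ring_nf

private lemma kernel_abs_le {p : ℝ} (hp : 1 < p) {a b : ℝ} (hab : |a| ≤ b) :
    |a| * |a| ^ (p - 2) ≤ b ^ (p - 1) := by
  rcases eq_or_ne a 0 with h | h
  · simp only [h, abs_zero, zero_mul]
    exact Real.rpow_nonneg (le_trans (abs_nonneg a) hab) _
  · have ha : 0 < |a| := abs_pos.2 h
    calc |a| * |a| ^ (p - 2) = |a| ^ (1:ℝ) * |a| ^ (p - 2) := by rw [Real.rpow_one]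
      _ = |a| ^ (p - 1) := by rw [← Real.rpow_add ha]; ring_nf
      _ ≤ b ^ (p - 1) := Real.rpow_le_rpow (abs_nonneg a) hab (by linarith)

private lemma two_mul_max_rpow {a b q : ℝ} (ha : 0 ≤ a) (hb : 0 ≤ b) (hq : 0 ≤ q) :
    (a + b) ^ q ≤ (2:ℝ) ^ q * (a ^ q + b ^ q) := by
  rcases le_total a b with h | h
  · calc (a + b) ^ q ≤ (2 * b) ^ q :=
        Real.rpow_le_rpow (by linarith) (by linarith) hq
      _ = (2:ℝ) ^ q * b ^ q := Real.mul_rpow (by norm_num) hb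
      _ ≤ (2:ℝ) ^ q * (a ^ q + b ^ q) := by
        have := Real.rpow_nonneg ha q
        have := Real.rpow_pos_of_pos (show (0:ℝ) < 2 by norm_num) q
        nlinarith
  · calc (a + b) ^ q ≤ (2 * a) ^ q :=
        Real.rpow_le_rpow (by linarith) (by linarith) hq
      _ = (2:ℝ) ^ q * a ^ q := Real.mul_rpow (by norm_num) ha
      _ ≤ (2:ℝ) ^ q * (a ^ q + b ^ q) := by
        have := Real.rpow_nonneg hb q
        have := Real.rpow_pos_of_pos (show (0:ℝ) < 2 by norm_num) q
        nlinarith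

private lemma shell_id {ρ β : ℝ} (hρ : 0 < ρ) (n j : ℕ) :
    (2:ℝ) ^ |β| * (ρ * (2:ℝ) ^ (-(j:ℝ) - 1)) ^ β * (ρ * (2:ℝ) ^ (-(j:ℝ))) ^ n =
      (2:ℝ) ^ |β| * (2:ℝ) ^ (-β) * ρ ^ (β + (n:ℝ)) * ((2:ℝ) ^ (-(β + (n:ℝ)))) ^ j := by
  have h2p : (0:ℝ) < 2 := two_pos
  rw [Real.mul_rpow hρ.le (Real.rpow_nonneg h2p.le _), mul_pow,
    ← Real.rpow_natCast ρ n, ← Real.rpow_natCast ((2:ℝ) ^ (-(j:ℝ))) n,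
    ← Real.rpow_natCast ((2:ℝ) ^ (-(β + (n:ℝ)))) j,
    ← Real.rpow_mul h2p.le, ← Real.rpow_mul h2p.le, ← Real.rpow_mul h2p.le]
  simp only [Real.rpow_def_of_pos hρ, Real.rpow_def_of_pos h2p, ← Real.exp_add]
  congr 1
  ring

private lemma shell_id_far {ρ β : ℝ} (hρ : 0 < ρ) (n j : ℕ) :
    (ρ * (2:ℝ) ^ (j:ℝ)) ^ β * (ρ * (2:ℝ) ^ ((j:ℝ) + 1)) ^ n =
      (2:ℝ) ^ (n:ℝ) * ρ ^ (β + (n:ℝ)) * ((2:ℝ) ^ (β + (n:ℝ))) ^ j := by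
  have h2p : (0:ℝ) < 2 := two_pos
  rw [Real.mul_rpow hρ.le (Real.rpow_nonneg h2p.le _), mul_pow,
    ← Real.rpow_natCast ρ n, ← Real.rpow_natCast ((2:ℝ) ^ ((j:ℝ) + 1)) n,
    ← Real.rpow_natCast ((2:ℝ) ^ (β + (n:ℝ))) j,
    ← Real.rpow_mul h2p.le, ← Real.rpow_mul h2p.le, ← Real.rpow_mul h2p.le]
  simp only [Real.rpow_def_of_pos hρ, Real.rpow_def_of_pos h2p, ← Real.exp_add]
  congr 1
  ring

private lemma lintegral_near {n : ℕ} (hn : 0 < n) (x : EuclideanSpace ℝ (Fin n))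
    {ρ : ℝ} (hρ : 0 < ρ) {β : ℝ} (hβ : 0 < β + n) :
    ∫⁻ y in Metric.ball x ρ, ENNReal.ofReal (‖x - y‖ ^ β) ∂volume ≤
      volume (Metric.ball (0 : EuclideanSpace ℝ (Fin n)) 1) *
        ENNReal.ofReal ((2:ℝ) ^ |β| * (2:ℝ) ^ (-β) * ρ ^ (β + (n:ℝ))) *
        (1 - ENNReal.ofReal ((2:ℝ) ^ (-(β + (n:ℝ)))))⁻¹ := by
  haveI : Nonempty (Fin n) := ⟨⟨0, hn⟩⟩
  have h2p : (0:ℝ) < 2 := two_pos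
  set S : ℕ → Set (EuclideanSpace ℝ (Fin n)) := fun j =>
    {y | ρ * 2 ^ (-(j:ℝ) - 1) < ‖x - y‖ ∧ ‖x - y‖ ≤ ρ * 2 ^ (-(j:ℝ))} with hS
  -- covering
  have hcover : Metric.ball x ρ ⊆ {x} ∪ ⋃ j, S j := by
    intro y hy
    rcases eq_or_ne y x with h | h
    · exact Or.inl h
    · right
      have hd0 : 0 < ‖x - y‖ := by
        rw [norm_pos_iff, sub_ne_zero]; exact Ne.symm h
      have hd : ‖x - y‖ < ρ := by
        rw [← norm_sub_rev]; simpa [dist_eq_norm] using hy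
      set d := ‖x - y‖ with hdd
      have h1 : 1 ≤ ρ / d := by rw [le_div_iff₀ hd0]; linarith
      set j := ⌊Real.logb 2 (ρ / d)⌋₊ with hj
      have h2 : (j:ℝ) ≤ Real.logb 2 (ρ / d) :=
        Nat.floor_le (Real.logb_nonneg one_lt_two h1)
      have h3 : Real.logb 2 (ρ / d) < (j:ℝ) + 1 := Nat.lt_floor_add_one _
      have hlogb : (2:ℝ) ^ Real.logb 2 (ρ / d) = ρ / d :=
        Real.rpow_logb h2p (by norm_num) (by positivity)
      refine mem_iUnion.2 ⟨j, ?_, ?_⟩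
      · -- ρ * 2 ^ (-(j:ℝ) - 1) < d
        have hub : ρ / d < (2:ℝ) ^ ((j:ℝ) + 1) := by
          rw [← hlogb]; exact Real.rpow_lt_rpow_of_exponent_lt one_lt_two h3
        have hlt : ρ < (2:ℝ) ^ ((j:ℝ) + 1) * d := (div_lt_iff₀ hd0).1 hub
        have h2pow : (0:ℝ) < (2:ℝ) ^ ((j:ℝ) + 1) := Real.rpow_pos_of_pos h2p _
        rw [show -(j:ℝ) - 1 = -((j:ℝ) + 1) by ring, Real.rpow_neg h2p.le,
          mul_comm ρ, ← div_eq_inv_mul, div_lt_iff₀ h2pow]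
        linarith
      · -- d ≤ ρ * 2 ^ (-(j:ℝ))
        have hlb : (2:ℝ) ^ (j:ℝ) ≤ ρ / d := by
          rw [← hlogb]; exact Real.rpow_le_rpow_of_exponent_le one_le_two h2
        have h2pow : (0:ℝ) < (2:ℝ) ^ (j:ℝ) := Real.rpow_pos_of_pos h2p _
        have hle : (2:ℝ) ^ (j:ℝ) * d ≤ ρ := (le_div_iff₀ hd0).1 hlb
        rw [Real.rpow_neg h2p.le, mul_comm ρ, ← div_eq_inv_mul, le_div_iff₀ h2pow]
        linarith
  -- per-shell bound
  have hshell : ∀ j : ℕ, ∫⁻ y in S j, ENNReal.ofReal (‖x - y‖ ^ β) ∂volume ≤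
      volume (Metric.ball (0 : EuclideanSpace ℝ (Fin n)) 1) *
        ENNReal.ofReal ((2:ℝ) ^ |β| * (2:ℝ) ^ (-β) * ρ ^ (β + (n:ℝ))) *
        (ENNReal.ofReal ((2:ℝ) ^ (-(β + (n:ℝ)))))^j := by
    intro j
    set a := ρ * (2:ℝ) ^ (-(j:ℝ) - 1) with ha
    have hapos : 0 < a := mul_pos hρ (Real.rpow_pos_of_pos h2p _)
    have hdouble : ρ * (2:ℝ) ^ (-(j:ℝ)) = 2 * a := by
      rw [ha, show -(j:ℝ) = 1 + (-(j:ℝ) - 1) by ring, Real.rpow_add h2p,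
        Real.rpow_one]; ring
    have hpoint : ∀ y ∈ S j, ENNReal.ofReal (‖x - y‖ ^ β) ≤
        ENNReal.ofReal ((2:ℝ) ^ |β| * a ^ β) := by
      intro y hy
      obtain ⟨hy1, hy2⟩ := hy
      apply ENNReal.ofReal_le_ofReal
      rcases le_or_gt 0 β with hb | hb
      · calc ‖x - y‖ ^ β ≤ (2 * a) ^ β := by
              apply Real.rpow_le_rpow (norm_nonneg _) _ hb
              rw [← hdouble]; exact hy2
          _ = (2:ℝ) ^ β * a ^ β := Real.mul_rpow h2p.le hapos.le
          _ ≤ (2:ℝ) ^ |β| * a ^ β := by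
              apply mul_le_mul_of_nonneg_right _ (Real.rpow_nonneg hapos.le _)
              exact Real.rpow_le_rpow_of_exponent_le one_le_two (le_abs_self β)
      · calc ‖x - y‖ ^ β ≤ a ^ β :=
              Real.rpow_le_rpow_of_nonpos hapos hy1.le hb.le
          _ ≤ (2:ℝ) ^ |β| * a ^ β := by
              apply le_mul_of_one_le_left (Real.rpow_nonneg hapos.le _)
              exact Real.one_le_rpow one_le_two (abs_nonneg β)
    have hSsub : S j ⊆ Metric.closedBall x (ρ * (2:ℝ) ^ (-(j:ℝ))) := by
      intro y hy
      rw [Metric.mem_closedBall, dist_eq_norm, norm_sub_rev]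
      exact hy.2
    have hvol : volume (S j) ≤
        ENNReal.ofReal ((ρ * (2:ℝ) ^ (-(j:ℝ))) ^ n) *
          volume (Metric.ball (0 : EuclideanSpace ℝ (Fin n)) 1) := by
      refine le_trans (measure_mono hSsub) ?_
      rw [MeasureTheory.Measure.addHaar_closedBall volume x
        (by positivity : (0:ℝ) ≤ ρ * (2:ℝ) ^ (-(j:ℝ)))]
      rw [finrank_euclideanSpace_fin]
    calc ∫⁻ y in S j, ENNReal.ofReal (‖x - y‖ ^ β) ∂volume
        ≤ ∫⁻ _ in S j, ENNReal.ofReal ((2:ℝ) ^ |β| * a ^ β) ∂volume :=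
          setLIntegral_mono measurable_const hpoint
      _ = ENNReal.ofReal ((2:ℝ) ^ |β| * a ^ β) * volume (S j) := setLIntegral_const _ _
      _ ≤ ENNReal.ofReal ((2:ℝ) ^ |β| * a ^ β) *
            (ENNReal.ofReal ((ρ * (2:ℝ) ^ (-(j:ℝ))) ^ n) *
              volume (Metric.ball (0 : EuclideanSpace ℝ (Fin n)) 1)) :=
          mul_le_mul_right hvol _
      _ = volume (Metric.ball (0 : EuclideanSpace ℝ (Fin n)) 1) *
          (ENNReal.ofReal ((2:ℝ) ^ |β| * a ^ β) *
            ENNReal.ofReal ((ρ * (2:ℝ) ^ (-(j:ℝ))) ^ n)) := by ring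
      _ = volume (Metric.ball (0 : EuclideanSpace ℝ (Fin n)) 1) *
          ENNReal.ofReal ((2:ℝ) ^ |β| * a ^ β * (ρ * (2:ℝ) ^ (-(j:ℝ))) ^ n) := by
          rw [← ENNReal.ofReal_mul (by positivity)]
      _ = volume (Metric.ball (0 : EuclideanSpace ℝ (Fin n)) 1) *
          ENNReal.ofReal ((2:ℝ) ^ |β| * (2:ℝ) ^ (-β) * ρ ^ (β + (n:ℝ))) *
          (ENNReal.ofReal ((2:ℝ) ^ (-(β + (n:ℝ)))))^j := by
          rw [ha, shell_id hρ n j, ENNReal.ofReal_mul (by positivity),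
            ENNReal.ofReal_pow (Real.rpow_nonneg h2p.le _)]
          ring
  -- combine
  calc ∫⁻ y in Metric.ball x ρ, ENNReal.ofReal (‖x - y‖ ^ β) ∂volume
      ≤ ∫⁻ y in {x} ∪ ⋃ j, S j, ENNReal.ofReal (‖x - y‖ ^ β) ∂volume :=
        lintegral_mono_set hcover
    _ ≤ (∫⁻ y in {x}, ENNReal.ofReal (‖x - y‖ ^ β) ∂volume) +
        ∫⁻ y in ⋃ j, S j, ENNReal.ofReal (‖x - y‖ ^ β) ∂volume :=
        lintegral_union_le _ _ _
    _ ≤ 0 + ∑' j, ∫⁻ y in S j, ENNReal.ofReal (‖x - y‖ ^ β) ∂volume := by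
        gcongr
        · rw [setLIntegral_measure_zero _ _ (measure_singleton x)]
        · exact lintegral_iUnion_le _ _
    _ ≤ ∑' j, (volume (Metric.ball (0 : EuclideanSpace ℝ (Fin n)) 1) *
          ENNReal.ofReal ((2:ℝ) ^ |β| * (2:ℝ) ^ (-β) * ρ ^ (β + (n:ℝ))) *
          (ENNReal.ofReal ((2:ℝ) ^ (-(β + (n:ℝ)))))^j) := by
        rw [zero_add]; exact ENNReal.tsum_le_tsum hshell
    _ = volume (Metric.ball (0 : EuclideanSpace ℝ (Fin n)) 1) *
          ENNReal.ofReal ((2:ℝ) ^ |β| * (2:ℝ) ^ (-β) * ρ ^ (β + (n:ℝ))) *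
          (1 - ENNReal.ofReal ((2:ℝ) ^ (-(β + (n:ℝ)))))⁻¹ := by
        rw [ENNReal.tsum_mul_left, ENNReal.tsum_geometric]

private lemma lintegral_far {n : ℕ} (hn : 0 < n) (x : EuclideanSpace ℝ (Fin n))
    {ρ : ℝ} (hρ : 0 < ρ) {β : ℝ} (hβ : β ≤ 0) :
    ∫⁻ y in (Metric.ball x ρ)ᶜ, ENNReal.ofReal (‖x - y‖ ^ β) ∂volume ≤
      volume (Metric.ball (0 : EuclideanSpace ℝ (Fin n)) 1) *
        ENNReal.ofReal ((2:ℝ) ^ (n:ℝ) * ρ ^ (β + (n:ℝ))) *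
        (1 - ENNReal.ofReal ((2:ℝ) ^ (β + (n:ℝ))))⁻¹ := by
  haveI : Nonempty (Fin n) := ⟨⟨0, hn⟩⟩
  have h2p : (0:ℝ) < 2 := two_pos
  set S : ℕ → Set (EuclideanSpace ℝ (Fin n)) := fun j =>
    {y | ρ * 2 ^ (j:ℝ) ≤ ‖x - y‖ ∧ ‖x - y‖ < ρ * 2 ^ ((j:ℝ) + 1)} with hS
  have hcover : (Metric.ball x ρ)ᶜ ⊆ ⋃ j, S j := by
    intro y hy
    have hd : ρ ≤ ‖x - y‖ := by
      rw [← norm_sub_rev]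
      simpa [dist_eq_norm] using hy
    have hd0 : 0 < ‖x - y‖ := lt_of_lt_of_le hρ hd
    set d := ‖x - y‖ with hdd
    have h1 : 1 ≤ d / ρ := by rw [le_div_iff₀ hρ]; linarith
    set j := ⌊Real.logb 2 (d / ρ)⌋₊ with hj
    have h2 : (j:ℝ) ≤ Real.logb 2 (d / ρ) :=
      Nat.floor_le (Real.logb_nonneg one_lt_two h1)
    have h3 : Real.logb 2 (d / ρ) < (j:ℝ) + 1 := Nat.lt_floor_add_one _
    have hlogb : (2:ℝ) ^ Real.logb 2 (d / ρ) = d / ρ :=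
      Real.rpow_logb h2p (by norm_num) (by positivity)
    refine mem_iUnion.2 ⟨j, ?_, ?_⟩
    · have hlb : (2:ℝ) ^ (j:ℝ) ≤ d / ρ := by
        rw [← hlogb]; exact Real.rpow_le_rpow_of_exponent_le one_le_two h2
      have := (le_div_iff₀ hρ).1 hlb
      linarith
    · have hub : d / ρ < (2:ℝ) ^ ((j:ℝ) + 1) := by
        rw [← hlogb]; exact Real.rpow_lt_rpow_of_exponent_lt one_lt_two h3
      have := (div_lt_iff₀ hρ).1 hub
      linarith
  have hshell : ∀ j : ℕ, ∫⁻ y in S j, ENNReal.ofReal (‖x - y‖ ^ β) ∂volume ≤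
      volume (Metric.ball (0 : EuclideanSpace ℝ (Fin n)) 1) *
        ENNReal.ofReal ((2:ℝ) ^ (n:ℝ) * ρ ^ (β + (n:ℝ))) *
        (ENNReal.ofReal ((2:ℝ) ^ (β + (n:ℝ))))^j := by
    intro j
    set a := ρ * (2:ℝ) ^ (j:ℝ) with ha
    have hapos : 0 < a := mul_pos hρ (Real.rpow_pos_of_pos h2p _)
    have hpoint : ∀ y ∈ S j, ENNReal.ofReal (‖x - y‖ ^ β) ≤
        ENNReal.ofReal (a ^ β) := by
      intro y hy
      exact ENNReal.ofReal_le_ofReal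
        (Real.rpow_le_rpow_of_nonpos hapos hy.1 hβ)
    have hSsub : S j ⊆ Metric.closedBall x (ρ * (2:ℝ) ^ ((j:ℝ) + 1)) := by
      intro y hy
      rw [Metric.mem_closedBall, dist_eq_norm, norm_sub_rev]
      exact hy.2.le
    have hvol : volume (S j) ≤
        ENNReal.ofReal ((ρ * (2:ℝ) ^ ((j:ℝ) + 1)) ^ n) *
          volume (Metric.ball (0 : EuclideanSpace ℝ (Fin n)) 1) := by
      refine le_trans (measure_mono hSsub) ?_
      rw [MeasureTheory.Measure.addHaar_closedBall volume x
        (by positivity : (0:ℝ) ≤ ρ * (2:ℝ) ^ ((j:ℝ) + 1))]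
      rw [finrank_euclideanSpace_fin]
    calc ∫⁻ y in S j, ENNReal.ofReal (‖x - y‖ ^ β) ∂volume
        ≤ ∫⁻ _ in S j, ENNReal.ofReal (a ^ β) ∂volume :=
          setLIntegral_mono measurable_const hpoint
      _ = ENNReal.ofReal (a ^ β) * volume (S j) := setLIntegral_const _ _
      _ ≤ ENNReal.ofReal (a ^ β) *
            (ENNReal.ofReal ((ρ * (2:ℝ) ^ ((j:ℝ) + 1)) ^ n) *
              volume (Metric.ball (0 : EuclideanSpace ℝ (Fin n)) 1)) :=
          mul_le_mul_right hvol _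
      _ = volume (Metric.ball (0 : EuclideanSpace ℝ (Fin n)) 1) *
          (ENNReal.ofReal (a ^ β) *
            ENNReal.ofReal ((ρ * (2:ℝ) ^ ((j:ℝ) + 1)) ^ n)) := by ring
      _ = volume (Metric.ball (0 : EuclideanSpace ℝ (Fin n)) 1) *
          ENNReal.ofReal (a ^ β * (ρ * (2:ℝ) ^ ((j:ℝ) + 1)) ^ n) := by
          rw [← ENNReal.ofReal_mul (by positivity)]
      _ = volume (Metric.ball (0 : EuclideanSpace ℝ (Fin n)) 1) *
          ENNReal.ofReal ((2:ℝ) ^ (n:ℝ) * ρ ^ (β + (n:ℝ))) *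
          (ENNReal.ofReal ((2:ℝ) ^ (β + (n:ℝ))))^j := by
          rw [ha, shell_id_far hρ n j, ENNReal.ofReal_mul (by positivity),
            ENNReal.ofReal_pow (Real.rpow_nonneg h2p.le _)]
          ring
  calc ∫⁻ y in (Metric.ball x ρ)ᶜ, ENNReal.ofReal (‖x - y‖ ^ β) ∂volume
      ≤ ∫⁻ y in ⋃ j, S j, ENNReal.ofReal (‖x - y‖ ^ β) ∂volume :=
        lintegral_mono_set hcover
    _ ≤ ∑' j, ∫⁻ y in S j, ENNReal.ofReal (‖x - y‖ ^ β) ∂volume :=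
        lintegral_iUnion_le _ _
    _ ≤ ∑' j, (volume (Metric.ball (0 : EuclideanSpace ℝ (Fin n)) 1) *
          ENNReal.ofReal ((2:ℝ) ^ (n:ℝ) * ρ ^ (β + (n:ℝ))) *
          (ENNReal.ofReal ((2:ℝ) ^ (β + (n:ℝ))))^j) :=
        ENNReal.tsum_le_tsum hshell
    _ = volume (Metric.ball (0 : EuclideanSpace ℝ (Fin n)) 1) *
          ENNReal.ofReal ((2:ℝ) ^ (n:ℝ) * ρ ^ (β + (n:ℝ))) *
          (1 - ENNReal.ofReal ((2:ℝ) ^ (β + (n:ℝ))))⁻¹ := by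
        rw [ENNReal.tsum_mul_left, ENNReal.tsum_geometric]

end FracAux

set_option maxHeartbeats 1000000 in
private lemma final_real_bound {n : ℕ} {p s ρ K M V : ℝ}
    (hp : 1 < p) (hρ : 0 < ρ) (hK : 0 < K) (hM0 : 0 ≤ M) (hV : 0 ≤ V)
    (hs0 : 0 < s) (hspp : s * p < p - 1) :
    V * ((2:ℝ) ^ |p - 1 - ((n:ℝ) + s * p)| * (2:ℝ) ^ (-(p - 1 - ((n:ℝ) + s * p)))) *
        ((2:ℝ) ^ (p - 1 - s*p) / ((p - 1 - s*p) * Real.log 2)) *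
        (K ^ (p-1) * ρ ^ (p - 1 - s*p)) +
      V * (2:ℝ) ^ (n:ℝ) * ((2:ℝ) ^ (s*p) / ((s*p) * Real.log 2)) *
        ((2 * M + K * ρ) ^ (p-1) * ρ ^ (-(s*p))) ≤
    ((V + 1) * (2:ℝ) ^ (2*(n:ℝ) + 6*p) / Real.log 2) / (s * (p - 1 - s * p)) *
      (K ^ (p - 1) * ρ ^ (p - 1 - s * p) + M ^ (p - 1) * ρ ^ (-(s * p))) := by
  have hL2 : (0:ℝ) < Real.log 2 := Real.log_pos one_lt_two
  have h2p : (0:ℝ) < 2 := two_pos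
  have hppos : 0 < p := by linarith
  have hα : 0 < p - 1 - s * p := by linarith
  have hsp : 0 < s * p := mul_pos hs0 hppos
  have hslt1 : s < 1 := by nlinarith
  set βN : ℝ := p - 1 - ((n:ℝ) + s * p) with hβN
  set G1 : ℝ := (2:ℝ) ^ |βN| * (2:ℝ) ^ (-βN) with hG1
  have hG1nn : 0 ≤ G1 := by rw [hG1]; positivity
  set C1 : ℝ := V * G1 * ((2:ℝ) ^ (p - 1 - s*p) / ((p - 1 - s*p) * Real.log 2)) with hC1def
  set C2 : ℝ := V * (2:ℝ) ^ (n:ℝ) * ((2:ℝ) ^ (s*p) / ((s*p) * Real.log 2)) with hC2def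
  set Q : ℝ := 2 * M + K * ρ with hQdef
  have hQ0 : 0 ≤ Q := by rw [hQdef]; positivity
  set c : ℝ := (V + 1) * (2:ℝ) ^ (2*(n:ℝ) + 6*p) / Real.log 2 with hcdef
  set D : ℝ := c / (s * (p - 1 - s * p)) with hDdef
  have hC2nn : 0 ≤ C2 := by
    rw [hC2def]
    exact mul_nonneg (mul_nonneg hV (Real.rpow_nonneg h2p.le _))
      (div_nonneg (Real.rpow_nonneg h2p.le _) (mul_nonneg hsp.le hL2.le))
  have hr1 : (0:ℝ) < ρ ^ (p - 1 - s*p) := Real.rpow_pos_of_pos hρ _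
  have hr2 : (0:ℝ) < ρ ^ (-(s*p)) := Real.rpow_pos_of_pos hρ _
  have hrp : (0:ℝ) < ρ ^ (p-1) := Real.rpow_pos_of_pos hρ _
  have ha : (0:ℝ) < K ^ (p-1) := Real.rpow_pos_of_pos hK _
  have hb : (0:ℝ) ≤ M ^ (p-1) := Real.rpow_nonneg hM0 _
  have hsplit : ρ ^ (-(s*p)) * ρ ^ (p-1) = ρ ^ (p - 1 - s*p) := by
    rw [← Real.rpow_add hρ]; ring_nf
  have hQbound : Q ^ (p-1) ≤ (2:ℝ)^(p-1) * ((2:ℝ)^(p-1) * M ^ (p-1) + K ^ (p-1) * ρ ^ (p-1)) := by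
    have h1 : Q ^ (p-1) ≤ (2:ℝ)^(p-1) * ((2*M) ^ (p-1) + (K*ρ) ^ (p-1)) := by
      rw [hQdef]
      exact two_mul_max_rpow (by positivity) (by positivity) (by linarith)
    rwa [Real.mul_rpow (by norm_num) hM0, Real.mul_rpow hK.le hρ.le] at h1
  have hβabs : |βN| ≤ (n:ℝ) + p := by
    rw [abs_le, hβN]
    have := Nat.cast_nonneg (α := ℝ) n
    constructor
    · linarith
    · linarith
  have h2E1 : (2:ℝ) ^ (2*(n:ℝ) + 2*p) * (2*s) ≤ (2:ℝ) ^ (2*(n:ℝ) + 6*p) := by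
    have h1 : (2:ℝ) ^ (2*(n:ℝ) + 2*p + 1) = (2:ℝ) ^ (2*(n:ℝ) + 2*p) * (2:ℝ) ^ (1:ℝ) :=
      Real.rpow_add h2p _ _
    rw [Real.rpow_one] at h1
    have h2 : (2:ℝ) ^ (2*(n:ℝ) + 2*p + 1) ≤ (2:ℝ) ^ (2*(n:ℝ) + 6*p) :=
      Real.rpow_le_rpow_of_exponent_le one_le_two (by linarith)
    have h3 : (0:ℝ) < (2:ℝ) ^ (2*(n:ℝ) + 2*p) := Real.rpow_pos_of_pos h2p _
    linarith [h1, h2, mul_le_mul_of_nonneg_left hslt1.le h3.le]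
  have hGα : G1 * (2:ℝ) ^ (p - 1 - s*p) ≤ (2:ℝ) ^ (2*(n:ℝ) + 2*p) := by
    rw [hG1, mul_assoc, ← Real.rpow_add h2p, ← Real.rpow_add h2p]
    apply Real.rpow_le_rpow_of_exponent_le one_le_two
    have h1 : -βN ≤ (n:ℝ) := by rw [hβN]; linarith
    linarith [hβabs]
  have h2E : (0:ℝ) < (2:ℝ) ^ (2*(n:ℝ) + 6*p) := Real.rpow_pos_of_pos h2p _
  have hcoefA : C1 ≤ D / 2 := by
    rw [hC1def, hDdef, hcdef]
    rw [show V * G1 * ((2:ℝ) ^ (p - 1 - s*p) / ((p - 1 - s*p) * Real.log 2)) =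
      V * (G1 * (2:ℝ) ^ (p - 1 - s*p)) / ((p - 1 - s*p) * Real.log 2) by ring]
    rw [div_div, div_div]
    rw [div_le_div_iff₀ (by positivity) (by positivity)]
    have key : V * (G1 * (2:ℝ) ^ (p - 1 - s*p)) * (2 * s) ≤
        (V + 1) * (2:ℝ) ^ (2*(n:ℝ) + 6*p) := by
      have hintA := mul_le_mul_of_nonneg_right
        (mul_le_mul_of_nonneg_left hGα hV) (by positivity : (0:ℝ) ≤ 2*s)
      have hintB := mul_le_mul_of_nonneg_left h2E1 hV
      linarith [hintA, hintB, h2E]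
    linarith [mul_le_mul_of_nonneg_right key (mul_nonneg hα.le hL2.le)]
  have hcoefB : C2 * (2:ℝ)^(p-1) ≤ D / 2 := by
    rw [hC2def, hDdef, hcdef]
    rw [show V * (2:ℝ) ^ (n:ℝ) * ((2:ℝ) ^ (s*p) / ((s*p) * Real.log 2)) * (2:ℝ)^(p-1) =
      V * ((2:ℝ) ^ (n:ℝ) * (2:ℝ) ^ (s*p) * (2:ℝ)^(p-1)) / ((s*p) * Real.log 2) by ring]
    rw [div_div, div_div]
    rw [div_le_div_iff₀ (by positivity) (by positivity)]
    have hX : (2:ℝ) ^ (n:ℝ) * (2:ℝ) ^ (s*p) * (2:ℝ)^(p-1) * 2 ≤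
        (2:ℝ) ^ (2*(n:ℝ) + 6*p) := by
      rw [show (2:ℝ) ^ (n:ℝ) * (2:ℝ) ^ (s*p) * (2:ℝ)^(p-1) * 2 =
        (2:ℝ) ^ (n:ℝ) * ((2:ℝ) ^ (s*p) * ((2:ℝ)^(p-1) * (2:ℝ)^(1:ℝ))) by
          rw [Real.rpow_one]; ring]
      rw [← Real.rpow_add h2p, ← Real.rpow_add h2p, ← Real.rpow_add h2p]
      apply Real.rpow_le_rpow_of_exponent_le one_le_two
      have := Nat.cast_nonneg (α := ℝ) n
      linarith
    have key : V * ((2:ℝ) ^ (n:ℝ) * (2:ℝ) ^ (s*p) * (2:ℝ)^(p-1)) * ((p - 1 - s*p) * 2) ≤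
        (V + 1) * (2:ℝ) ^ (2*(n:ℝ) + 6*p) * p := by
      have hint1 := mul_le_mul_of_nonneg_left hX (mul_nonneg hV hα.le)
      have hint2 := mul_le_mul_of_nonneg_right
        (mul_le_mul_of_nonneg_left (show p - 1 - s*p ≤ p by linarith) hV) h2E.le
      have hint3 := mul_le_mul_of_nonneg_right
        (mul_le_mul_of_nonneg_right (show V ≤ V + 1 by linarith) hppos.le) h2E.le
      linarith [hint1, hint2, hint3]
    linarith [mul_le_mul_of_nonneg_right key (mul_nonneg hs0.le hL2.le)]
  have hcoef2 : C2 * ((2:ℝ)^(p-1) * (2:ℝ)^(p-1)) ≤ D := by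
    rw [hC2def, hDdef, hcdef]
    rw [show V * (2:ℝ) ^ (n:ℝ) * ((2:ℝ) ^ (s*p) / ((s*p) * Real.log 2)) *
        ((2:ℝ)^(p-1) * (2:ℝ)^(p-1)) =
      V * ((2:ℝ) ^ (n:ℝ) * (2:ℝ) ^ (s*p) * (2:ℝ)^(p-1) * (2:ℝ)^(p-1)) /
        ((s*p) * Real.log 2) by ring]
    rw [div_div]
    rw [div_le_div_iff₀ (by positivity) (by positivity)]
    have hX : (2:ℝ) ^ (n:ℝ) * (2:ℝ) ^ (s*p) * (2:ℝ)^(p-1) * (2:ℝ)^(p-1) ≤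
        (2:ℝ) ^ (2*(n:ℝ) + 6*p) := by
      rw [← Real.rpow_add h2p, ← Real.rpow_add h2p, ← Real.rpow_add h2p]
      apply Real.rpow_le_rpow_of_exponent_le one_le_two
      have := Nat.cast_nonneg (α := ℝ) n
      linarith
    have key : V * ((2:ℝ) ^ (n:ℝ) * (2:ℝ) ^ (s*p) * (2:ℝ)^(p-1) * (2:ℝ)^(p-1)) *
        (p - 1 - s*p) ≤ (V + 1) * (2:ℝ) ^ (2*(n:ℝ) + 6*p) * p := by
      have hint1 := mul_le_mul_of_nonneg_left hX (mul_nonneg hV hα.le)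
      have hint2 := mul_le_mul_of_nonneg_right
        (mul_le_mul_of_nonneg_left (show p - 1 - s*p ≤ p by linarith) hV) h2E.le
      have hint3 := mul_le_mul_of_nonneg_right
        (mul_le_mul_of_nonneg_right (show V ≤ V + 1 by linarith) hppos.le) h2E.le
      linarith [hint1, hint2, hint3]
    linarith [mul_le_mul_of_nonneg_right key (mul_nonneg hs0.le hL2.le)]
  have hcoef1 : C1 + C2 * (2:ℝ)^(p-1) ≤ D := by linarith
  have e1 : C2 * (Q ^ (p-1) * ρ ^ (-(s*p))) ≤
      C2 * (((2:ℝ)^(p-1) * ((2:ℝ)^(p-1) * M ^ (p-1) + K ^ (p-1) * ρ ^ (p-1))) *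
        ρ ^ (-(s*p))) :=
    mul_le_mul_of_nonneg_left (mul_le_mul_of_nonneg_right hQbound hr2.le) hC2nn
  have e2 : C2 * (((2:ℝ)^(p-1) * ((2:ℝ)^(p-1) * M ^ (p-1) + K ^ (p-1) * ρ ^ (p-1))) *
        ρ ^ (-(s*p))) =
      (C2 * ((2:ℝ)^(p-1) * (2:ℝ)^(p-1))) * (M ^ (p-1) * ρ ^ (-(s*p))) +
      (C2 * (2:ℝ)^(p-1)) * (K ^ (p-1) * (ρ ^ (-(s*p)) * ρ ^ (p-1))) := by ring
  rw [hsplit] at e2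
  have e3 : (C2 * ((2:ℝ)^(p-1) * (2:ℝ)^(p-1))) * (M ^ (p-1) * ρ ^ (-(s*p))) ≤
      D * (M ^ (p-1) * ρ ^ (-(s*p))) :=
    mul_le_mul_of_nonneg_right hcoef2 (mul_nonneg hb hr2.le)
  have e4 : (C1 + C2 * (2:ℝ)^(p-1)) * (K ^ (p-1) * ρ ^ (p - 1 - s*p)) ≤
      D * (K ^ (p-1) * ρ ^ (p - 1 - s*p)) :=
    mul_le_mul_of_nonneg_right hcoef1 (mul_nonneg ha.le hr1.le)
  have goalD : C1 * (K ^ (p-1) * ρ ^ (p - 1 - s*p)) + C2 * (Q ^ (p-1) * ρ ^ (-(s*p))) ≤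
      D * (K ^ (p - 1) * ρ ^ (p - 1 - s * p) + M ^ (p - 1) * ρ ^ (-(s * p))) := by
    linarith [e1, e2, e3, e4]
  calc V * G1 * ((2:ℝ) ^ (p - 1 - s*p) / ((p - 1 - s*p) * Real.log 2)) *
        (K ^ (p-1) * ρ ^ (p - 1 - s*p)) +
      V * (2:ℝ) ^ (n:ℝ) * ((2:ℝ) ^ (s*p) / ((s*p) * Real.log 2)) *
        (Q ^ (p-1) * ρ ^ (-(s*p)))
      = C1 * (K ^ (p-1) * ρ ^ (p - 1 - s*p)) + C2 * (Q ^ (p-1) * ρ ^ (-(s*p))) := by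
        rw [hC1def, hC2def]
    _ ≤ D * (K ^ (p - 1) * ρ ^ (p - 1 - s * p) + M ^ (p - 1) * ρ ^ (-(s * p))) := goalD
    _ = c / (s * (p - 1 - s * p)) *
        (K ^ (p - 1) * ρ ^ (p - 1 - s * p) + M ^ (p - 1) * ρ ^ (-(s * p))) := by
        rw [hDdef]

set_option maxHeartbeats 2000000 in
/-- **Estimate for the fractional `p`-Laplacian of a bounded, locally Lipschitz function**
(Lemma A.1 of the paper). -/
theorem fracPLap_lipschitz_estimate
    (n : ℕ) {p : ℝ} (hp : 1 < p) :
    ∃ c : ℝ, 0 < c ∧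
      ∀ ρ s : ℝ, 0 < ρ → s ∈ Set.Ioo (0 : ℝ) ((p - 1) / p) →
        ∀ ψ : EuclideanSpace ℝ (Fin n) → ℝ,
          MeasureTheory.MemLp ψ ⊤ (volume : Measure (EuclideanSpace ℝ (Fin n))) →
          ∀ x : EuclideanSpace ℝ (Fin n), ∀ K : ℝ, 0 < K →
            (∀ y ∈ Metric.ball x ρ, |ψ y - ψ x| ≤ K * ‖y - x‖) →
            |fracPLap n s p ψ x| ≤
              c / (s * (p - 1 - s * p)) *
                (K ^ (p - 1) * ρ ^ (-(s * p) + p - 1) +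
                  (eLpNorm ψ ⊤ (volume : Measure (EuclideanSpace ℝ (Fin n)))).toReal ^ (p - 1) *
                    ρ ^ (-(s * p))) := by
  have hL2 : (0:ℝ) < Real.log 2 := Real.log_pos one_lt_two
  have h2p : (0:ℝ) < 2 := two_pos
  set V : ℝ := (volume (Metric.ball (0 : EuclideanSpace ℝ (Fin n)) 1)).toReal with hVdef
  have hV : 0 ≤ V := ENNReal.toReal_nonneg
  set c : ℝ := (V + 1) * (2:ℝ) ^ (2*(n:ℝ) + 6*p) / Real.log 2 with hcdef
  have hc : 0 < c := by
    apply div_pos _ hL2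
    have := Real.rpow_pos_of_pos h2p (2*(n:ℝ) + 6*p)
    nlinarith
  refine ⟨c, hc, ?_⟩
  intro ρ s hρ hs ψ hψ x K hK hlip
  obtain ⟨hs0, hs1⟩ := hs
  have hppos : 0 < p := by linarith
  have hspp : s * p < p - 1 := (lt_div_iff₀ hppos).1 hs1
  have hα : 0 < p - 1 - s * p := by linarith
  have hsp : 0 < s * p := mul_pos hs0 hppos
  have hslt1 : s < 1 := by nlinarith
  set M : ℝ := (eLpNorm ψ ⊤ (volume : Measure (EuclideanSpace ℝ (Fin n)))).toReal with hMdef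
  have hM0 : 0 ≤ M := ENNReal.toReal_nonneg
  have hRHSnn : 0 ≤ c / (s * (p - 1 - s * p)) *
      (K ^ (p - 1) * ρ ^ (-(s * p) + p - 1) + M ^ (p - 1) * ρ ^ (-(s * p))) := by
    apply mul_nonneg (div_nonneg hc.le (mul_nonneg hs0.le hα.le))
    have h1 : (0:ℝ) ≤ K ^ (p-1) := Real.rpow_nonneg hK.le _
    have h2 : (0:ℝ) ≤ M ^ (p-1) := Real.rpow_nonneg hM0 _
    have h3 : (0:ℝ) ≤ ρ ^ (-(s * p) + p - 1) := Real.rpow_nonneg hρ.le _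
    have h4 : (0:ℝ) ≤ ρ ^ (-(s * p)) := Real.rpow_nonneg hρ.le _
    nlinarith
  rcases Nat.eq_zero_or_pos n with hn0 | hn
  · subst hn0
    haveI : Subsingleton (EuclideanSpace ℝ (Fin 0)) :=
      ⟨fun a b => by ext i; exact Fin.elim0 i⟩
    have hzero : fracPLap 0 s p ψ x = 0 := by
      have h1 : (fun y : EuclideanSpace ℝ (Fin 0) =>
          (ψ x - ψ y) * |ψ x - ψ y| ^ (p - 2) / ‖x - y‖ ^ (((0:ℕ) : ℝ) + s * p)) =
          fun _ => 0 := by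
        funext y
        rw [Subsingleton.elim y x]
        simp
      unfold fracPLap
      rw [h1, integral_zero]
    rw [hzero, abs_zero]
    exact hRHSnn
  · haveI hne : Nonempty (Fin n) := ⟨⟨0, hn⟩⟩
    have hfin : eLpNorm ψ ⊤ (volume : Measure (EuclideanSpace ℝ (Fin n))) ≠ ⊤ := hψ.2.ne
    have hMae : ∀ᵐ y ∂(volume : Measure (EuclideanSpace ℝ (Fin n))), |ψ y| ≤ M := by
      filter_upwards [MeasureTheory.ae_le_eLpNormEssSup
        (f := ψ) (μ := (volume : Measure (EuclideanSpace ℝ (Fin n))))] with y hy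
      have hy' : (‖ψ y‖₊ : ℝ≥0∞) ≤ eLpNorm ψ ⊤ volume := by
        rwa [eLpNorm_exponent_top]
      have := ENNReal.toReal_mono hfin hy'
      simpa only [ENNReal.coe_toReal, coe_nnnorm, Real.norm_eq_abs] using this
    have hx0 : |ψ x| ≤ M + K * ρ := by
      have hball : 0 < volume (Metric.ball x ρ) := measure_ball_pos volume x hρ
      have hexists : ∃ y ∈ Metric.ball x ρ, |ψ y| ≤ M := by
        by_contra hcon
        push_neg at hcon
        have hsub : Metric.ball x ρ ⊆ {y | ¬ |ψ y| ≤ M} := fun y hy =>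
          not_le.2 (hcon y hy)
        exact absurd (measure_mono_null hsub (ae_iff.1 hMae)) hball.ne'
      obtain ⟨y, hyB, hyM⟩ := hexists
      have h2 := hlip y hyB
      have h3 : ‖y - x‖ ≤ ρ := le_of_lt (by simpa [dist_eq_norm] using hyB)
      have h4 : |ψ x| - |ψ y| ≤ |ψ x - ψ y| := abs_sub_abs_le_abs_sub _ _
      have h5 : |ψ x - ψ y| = |ψ y - ψ x| := abs_sub_comm _ _
      nlinarith [mul_le_mul_of_nonneg_left h3 hK.le]
    set βN : ℝ := p - 1 - ((n:ℝ) + s * p) with hβN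
    have hβNsum : βN + (n:ℝ) = p - 1 - s * p := by rw [hβN]; ring
    set G1 : ℝ := (2:ℝ) ^ |βN| * (2:ℝ) ^ (-βN) with hG1
    have hG1nn : 0 ≤ G1 := by
      rw [hG1]; positivity
    set C1 : ℝ := V * G1 * ((2:ℝ) ^ (p - 1 - s*p) / ((p - 1 - s*p) * Real.log 2)) with hC1def
    set C2 : ℝ := V * (2:ℝ) ^ (n:ℝ) * ((2:ℝ) ^ (s*p) / ((s*p) * Real.log 2)) with hC2def
    have hC1nn : 0 ≤ C1 := by
      rw [hC1def]
      exact mul_nonneg (mul_nonneg hV hG1nn)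
        (div_nonneg (Real.rpow_nonneg h2p.le _) (mul_nonneg hα.le hL2.le))
    have hC2nn : 0 ≤ C2 := by
      rw [hC2def]
      exact mul_nonneg (mul_nonneg hV (Real.rpow_nonneg h2p.le _))
        (div_nonneg (Real.rpow_nonneg h2p.le _) (mul_nonneg hsp.le hL2.le))
    set Q : ℝ := 2 * M + K * ρ with hQdef
    have hQ0 : 0 ≤ Q := by rw [hQdef]; positivity
    set F : EuclideanSpace ℝ (Fin n) → ℝ := fun y =>
      (ψ x - ψ y) * |ψ x - ψ y| ^ (p - 2) / ‖x - y‖ ^ ((n : ℝ) + s * p) with hF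
    have hVeq : volume (Metric.ball (0 : EuclideanSpace ℝ (Fin n)) 1) = ENNReal.ofReal V :=
      (ENNReal.ofReal_toReal measure_ball_lt_top.ne).symm
    -- near estimate
    have hnear : ∫⁻ y in Metric.ball x ρ, ENNReal.ofReal ‖F y‖ ∂volume ≤
        ENNReal.ofReal (C1 * (K ^ (p-1) * ρ ^ (p - 1 - s*p))) := by
      have hxne : ∀ᵐ y ∂(volume.restrict (Metric.ball x ρ)),
          y ≠ x := by
        refine ae_iff.2 ?_
        have h1 : {y : EuclideanSpace ℝ (Fin n) | ¬ y ≠ x} = {x} := by ext y; simp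
        rw [h1]
        refine le_antisymm (le_trans (Measure.restrict_apply_le _ _) ?_) zero_le
        rw [measure_singleton]
      have hpt : ∀ᵐ y ∂(volume.restrict (Metric.ball x ρ)),
          ENNReal.ofReal ‖F y‖ ≤ ENNReal.ofReal (K ^ (p-1) * ‖x - y‖ ^ βN) := by
        filter_upwards [hxne, ae_restrict_mem measurableSet_ball] with y hyx hyB
        apply ENNReal.ofReal_le_ofReal
        have hxy : (0:ℝ) < ‖x - y‖ := by
          rw [norm_pos_iff, sub_ne_zero]; exact fun h => hyx h.symm
        have hDpos : 0 < ‖x - y‖ ^ ((n:ℝ) + s * p) := Real.rpow_pos_of_pos hxy _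
        have hlipy : |ψ x - ψ y| ≤ K * ‖x - y‖ := by
          have h6 := hlip y hyB
          rwa [abs_sub_comm, norm_sub_rev] at h6
        have hnum := kernel_abs_le hp hlipy
        have habs : ‖F y‖ = |ψ x - ψ y| * |ψ x - ψ y| ^ (p-2) / ‖x - y‖ ^ ((n:ℝ)+s*p) := by
          simp only [hF, Real.norm_eq_abs, abs_div, abs_mul, abs_abs,
            abs_of_nonneg (Real.rpow_nonneg (abs_nonneg (ψ x - ψ y)) (p-2)),
            abs_of_pos hDpos]
        rw [habs]
        calc |ψ x - ψ y| * |ψ x - ψ y| ^ (p-2) / ‖x - y‖ ^ ((n:ℝ)+s*p)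
            ≤ (K * ‖x - y‖) ^ (p-1) / ‖x - y‖ ^ ((n:ℝ)+s*p) := by gcongr
          _ = K ^ (p-1) * ‖x - y‖ ^ βN := by
              rw [Real.mul_rpow hK.le (norm_nonneg _), mul_div_assoc,
                ← Real.rpow_sub hxy, hβN]
      calc ∫⁻ y in Metric.ball x ρ, ENNReal.ofReal ‖F y‖ ∂volume
          ≤ ∫⁻ y in Metric.ball x ρ, ENNReal.ofReal (K ^ (p-1) * ‖x - y‖ ^ βN) ∂volume :=
            lintegral_mono_ae hpt
        _ = ENNReal.ofReal (K ^ (p-1)) *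
              ∫⁻ y in Metric.ball x ρ, ENNReal.ofReal (‖x - y‖ ^ βN) ∂volume := by
            simp_rw [ENNReal.ofReal_mul (Real.rpow_nonneg hK.le _)]
            rw [lintegral_const_mul' _ _ ENNReal.ofReal_ne_top]
        _ ≤ ENNReal.ofReal (K ^ (p-1)) *
              (volume (Metric.ball (0 : EuclideanSpace ℝ (Fin n)) 1) *
              ENNReal.ofReal ((2:ℝ) ^ |βN| * (2:ℝ) ^ (-βN) * ρ ^ (βN + (n:ℝ))) *
              (1 - ENNReal.ofReal ((2:ℝ) ^ (-(βN + (n:ℝ)))))⁻¹) :=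
            mul_le_mul_right (lintegral_near hn x hρ (by rw [hβNsum]; exact hα)) _
        _ ≤ ENNReal.ofReal (K ^ (p-1)) * (ENNReal.ofReal V *
              ENNReal.ofReal ((2:ℝ) ^ |βN| * (2:ℝ) ^ (-βN) * ρ ^ (p - 1 - s*p)) *
              ENNReal.ofReal ((2:ℝ) ^ (p - 1 - s*p) / ((p - 1 - s*p) * Real.log 2))) := by
            rw [hβNsum, hVeq]
            exact mul_le_mul_right (mul_le_mul' le_rfl (aux_inv_geom hα)) _
        _ = ENNReal.ofReal (C1 * (K ^ (p-1) * ρ ^ (p - 1 - s*p))) := by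
            rw [← ENNReal.ofReal_mul (by positivity), ← ENNReal.ofReal_mul (by positivity),
              ← ENNReal.ofReal_mul (Real.rpow_nonneg hK.le _)]
            congr 1
            rw [hC1def, hG1]
            ring
    -- far estimate
    have hfar : ∫⁻ y in (Metric.ball x ρ)ᶜ, ENNReal.ofReal ‖F y‖ ∂volume ≤
        ENNReal.ofReal (C2 * (Q ^ (p-1) * ρ ^ (-(s*p)))) := by
      have hpt : ∀ᵐ y ∂(volume.restrict (Metric.ball x ρ)ᶜ),
          ENNReal.ofReal ‖F y‖ ≤
            ENNReal.ofReal (Q ^ (p-1) * ‖x - y‖ ^ (-((n:ℝ) + s * p))) := by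
        filter_upwards [ae_restrict_of_ae hMae,
          ae_restrict_mem measurableSet_ball.compl] with y hyM hyB
        apply ENNReal.ofReal_le_ofReal
        have hd : ρ ≤ ‖x - y‖ := by
          rw [norm_sub_rev]
          simpa [Metric.mem_ball, dist_eq_norm, not_lt] using hyB
        have hxy : (0:ℝ) < ‖x - y‖ := lt_of_lt_of_le hρ hd
        have hDpos : 0 < ‖x - y‖ ^ ((n:ℝ) + s * p) := Real.rpow_pos_of_pos hxy _
        have hbound : |ψ x - ψ y| ≤ Q := by
          have h7 : |ψ x - ψ y| ≤ |ψ x| + |ψ y| := by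
            rw [sub_eq_add_neg]
            exact (abs_add_le _ _).trans (by rw [abs_neg])
          rw [hQdef]
          linarith [hx0, hyM, h7]
        have hnum := kernel_abs_le hp hbound
        have habs : ‖F y‖ = |ψ x - ψ y| * |ψ x - ψ y| ^ (p-2) / ‖x - y‖ ^ ((n:ℝ)+s*p) := by
          simp only [hF, Real.norm_eq_abs, abs_div, abs_mul, abs_abs,
            abs_of_nonneg (Real.rpow_nonneg (abs_nonneg (ψ x - ψ y)) (p-2)),
            abs_of_pos hDpos]
        rw [habs]
        calc |ψ x - ψ y| * |ψ x - ψ y| ^ (p-2) / ‖x - y‖ ^ ((n:ℝ)+s*p)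
            ≤ Q ^ (p-1) / ‖x - y‖ ^ ((n:ℝ)+s*p) := by gcongr
          _ = Q ^ (p-1) * ‖x - y‖ ^ (-((n:ℝ)+s*p)) := by
              rw [Real.rpow_neg (norm_nonneg _), div_eq_mul_inv]
      have hfsum : -((n:ℝ) + s * p) + (n:ℝ) = -(s*p) := by ring
      calc ∫⁻ y in (Metric.ball x ρ)ᶜ, ENNReal.ofReal ‖F y‖ ∂volume
          ≤ ∫⁻ y in (Metric.ball x ρ)ᶜ,
              ENNReal.ofReal (Q ^ (p-1) * ‖x - y‖ ^ (-((n:ℝ) + s * p))) ∂volume :=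
            lintegral_mono_ae hpt
        _ = ENNReal.ofReal (Q ^ (p-1)) *
              ∫⁻ y in (Metric.ball x ρ)ᶜ,
                ENNReal.ofReal (‖x - y‖ ^ (-((n:ℝ) + s * p))) ∂volume := by
            simp_rw [ENNReal.ofReal_mul (Real.rpow_nonneg hQ0 _)]
            rw [lintegral_const_mul' _ _ ENNReal.ofReal_ne_top]
        _ ≤ ENNReal.ofReal (Q ^ (p-1)) *
              (volume (Metric.ball (0 : EuclideanSpace ℝ (Fin n)) 1) *
              ENNReal.ofReal ((2:ℝ) ^ (n:ℝ) * ρ ^ (-((n:ℝ) + s * p) + (n:ℝ))) *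
              (1 - ENNReal.ofReal ((2:ℝ) ^ (-((n:ℝ) + s * p) + (n:ℝ))))⁻¹) :=
            mul_le_mul_right (lintegral_far hn x hρ (by nlinarith)) _
        _ ≤ ENNReal.ofReal (Q ^ (p-1)) * (ENNReal.ofReal V *
              ENNReal.ofReal ((2:ℝ) ^ (n:ℝ) * ρ ^ (-(s*p))) *
              ENNReal.ofReal ((2:ℝ) ^ (s*p) / ((s*p) * Real.log 2))) := by
            rw [hfsum, hVeq]
            refine mul_le_mul_right (mul_le_mul' le_rfl ?_) _
            rw [show -(s*p) = -(s*p) from rfl]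
            exact aux_inv_geom hsp
        _ = ENNReal.ofReal (C2 * (Q ^ (p-1) * ρ ^ (-(s*p)))) := by
            rw [← ENNReal.ofReal_mul (by positivity), ← ENNReal.ofReal_mul (by positivity),
              ← ENNReal.ofReal_mul (Real.rpow_nonneg hQ0 _)]
            congr 1
            rw [hC2def]
            ring
    -- combine
    have hT1nn : (0:ℝ) ≤ C1 * (K ^ (p-1) * ρ ^ (p - 1 - s*p)) :=
      mul_nonneg hC1nn (mul_nonneg (Real.rpow_nonneg hK.le _) (Real.rpow_nonneg hρ.le _))
    have hT2nn : (0:ℝ) ≤ C2 * (Q ^ (p-1) * ρ ^ (-(s*p))) :=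
      mul_nonneg hC2nn (mul_nonneg (Real.rpow_nonneg hQ0 _) (Real.rpow_nonneg hρ.le _))
    have htotal : ∫⁻ y, ENNReal.ofReal ‖F y‖ ∂volume ≤
        ENNReal.ofReal (C1 * (K ^ (p-1) * ρ ^ (p - 1 - s*p)) +
          C2 * (Q ^ (p-1) * ρ ^ (-(s*p)))) := by
      rw [← lintegral_add_compl (fun y => ENNReal.ofReal ‖F y‖)
        (measurableSet_ball (x := x) (ε := ρ)), ENNReal.ofReal_add hT1nn hT2nn]
      exact add_le_add hnear hfar
    have hmain : |fracPLap n s p ψ x| ≤ (∫⁻ y, ENNReal.ofReal ‖F y‖ ∂volume).toReal := by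
      have h1 := MeasureTheory.norm_integral_le_lintegral_norm
        (μ := (volume : Measure (EuclideanSpace ℝ (Fin n)))) F
      have h2 : fracPLap n s p ψ x = ∫ y, F y ∂volume := rfl
      rw [h2, ← Real.norm_eq_abs]
      exact h1
    have hT : (∫⁻ y, ENNReal.ofReal ‖F y‖ ∂volume).toReal ≤
        C1 * (K ^ (p-1) * ρ ^ (p - 1 - s*p)) + C2 * (Q ^ (p-1) * ρ ^ (-(s*p))) :=
      ENNReal.toReal_le_of_le_ofReal (add_nonneg hT1nn hT2nn) htotal
    refine le_trans hmain (le_trans hT ?_)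
    rw [show -(s * p) + p - 1 = p - 1 - s * p by ring, hC1def, hC2def, hG1, hβN, hQdef, hcdef]
    exact final_real_bound hp hρ hK hM0 hV hs0 hspp
end

section
/- Let n ∈ ℕ, ρ ∈ (0,+∞), p ∈ [2,+∞), s ∈ (0,1) and ψ ∈ L^∞(ℝ^n) ∩ C(ℝ^n). Let x ∈ ℝ^n and assume that there exist K̂, C̃ ∈ (0,+∞) and a vector Σ(x) ∈ ℝ^n such that, for every y ∈ B_ρ(x), |ψ(x) − ψ(y)| ≤ K̂·|x − y| and ψ(y) − ψ(x) − Σ(x)·(y − x) ≤ C̃·|x − y|². Then there exists c_{n,p} ∈ (0,+∞), depending only on n and p, such that −(−Δ)_p^s ψ(x) ≤ (c_{n,p}/(s(1−s)))·(C̃·(max{|Σ(x)|, K̂})^{p−2}·ρ^{−sp+p} + ‖ψ‖_{L^∞(ℝ^n)}^{p−1}·ρ^{−sp}). -/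
open MeasureTheory
open scoped ENNReal NNReal

section AuxEstimates

open MeasureTheory Measure Set Metric
open scoped ENNReal NNReal

/-! ### Auxiliary scalar lemmas for `t ↦ t |t|^{p-2}` -/

private lemma phi_eq_rpow' {p : ℝ} (hp : 2 ≤ p) {t : ℝ} (ht : 0 ≤ t) :
    t * |t| ^ (p - 2) = t ^ (p - 1) := by
  rcases eq_or_lt_of_le ht with h | h
  · rw [← h]
    simp [Real.zero_rpow (show p - 1 ≠ 0 by intro hc; linarith [hc])]
  · rw [abs_of_nonneg ht]
    nth_rewrite 1 [← Real.rpow_one t]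
    rw [← Real.rpow_add h]
    congr 1
    ring

private lemma phi_eq_neg' {p : ℝ} (hp : 2 ≤ p) {t : ℝ} (ht : t ≤ 0) :
    t * |t| ^ (p - 2) = -((-t) ^ (p - 1)) := by
  have h := phi_eq_rpow' hp (neg_nonneg.2 ht)
  rw [abs_neg] at h
  nlinarith [h]

private lemma phi_mono' {p : ℝ} (hp : 2 ≤ p) : Monotone fun t : ℝ => t * |t| ^ (p - 2) := by
  intro a b hab
  simp only
  rcases le_total 0 a with ha | ha
  · have hb : 0 ≤ b := le_trans ha hab
    rw [abs_of_nonneg ha, abs_of_nonneg hb]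
    exact mul_le_mul hab (Real.rpow_le_rpow ha hab (by linarith)) (Real.rpow_nonneg ha _) hb
  · rcases le_total 0 b with hb | hb
    · have h1 : a * |a| ^ (p - 2) ≤ 0 :=
        mul_nonpos_of_nonpos_of_nonneg ha (Real.rpow_nonneg (abs_nonneg _) _)
      have h2 : 0 ≤ b * |b| ^ (p - 2) :=
        mul_nonneg hb (Real.rpow_nonneg (abs_nonneg _) _)
      linarith
    · rw [abs_of_nonpos ha, abs_of_nonpos hb]
      have h1 : -b * (-b) ^ (p - 2) ≤ -a * (-a) ^ (p - 2) :=
        mul_le_mul (by linarith) (Real.rpow_le_rpow (by linarith) (by linarith) (by linarith))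
          (Real.rpow_nonneg (by linarith) _) (by linarith)
      calc a * (-a) ^ (p - 2) = -(-a * (-a) ^ (p - 2)) := by ring
        _ ≤ -(-b * (-b) ^ (p - 2)) := by linarith
        _ = b * (-b) ^ (p - 2) := by ring

private lemma rpow_sub_rpow_le' {q : ℝ} (hq : 1 ≤ q) {a b R : ℝ} (hb : 0 ≤ b) (hba : b ≤ a)
    (haR : a ≤ R) : a ^ q - b ^ q ≤ q * R ^ (q - 1) * (a - b) := by
  have ha : 0 ≤ a := le_trans hb hba
  have hR : 0 ≤ R := le_trans ha haR
  have hd : ∀ t ∈ Icc (0:ℝ) R, HasDerivWithinAt (fun u : ℝ => u ^ q) (q * t ^ (q - 1))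
      (Icc (0:ℝ) R) t := fun t _ =>
    (Real.hasDerivAt_rpow_const (Or.inr hq)).hasDerivWithinAt
  have hbound : ∀ t ∈ Icc (0:ℝ) R, ‖q * t ^ (q - 1)‖ ≤ q * R ^ (q - 1) := by
    intro t ht
    rw [Real.norm_eq_abs, abs_mul, abs_of_nonneg (by linarith : (0:ℝ) ≤ q),
      abs_of_nonneg (Real.rpow_nonneg ht.1 _)]
    exact mul_le_mul_of_nonneg_left (Real.rpow_le_rpow ht.1 ht.2 (by linarith)) (by linarith)
  have hkey := Convex.norm_image_sub_le_of_norm_hasDerivWithin_le hd hbound (convex_Icc 0 R)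
    (⟨hb, le_trans hba haR⟩ : b ∈ Icc (0:ℝ) R) (⟨ha, haR⟩ : a ∈ Icc (0:ℝ) R)
  calc a ^ q - b ^ q ≤ |a ^ q - b ^ q| := le_abs_self _
    _ ≤ q * R ^ (q - 1) * ‖a - b‖ := by
        rw [← Real.norm_eq_abs]
        exact hkey
    _ = q * R ^ (q - 1) * (a - b) := by
        rw [Real.norm_eq_abs, abs_of_nonneg (by linarith)]

private lemma phi_sub_le' {p : ℝ} (hp : 2 ≤ p) {a L R δ : ℝ} (hδ : 0 ≤ δ) (haR : |a| ≤ R)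
    (hLR : |L| ≤ R) (hLa : L - δ ≤ a) :
    L * |L| ^ (p - 2) - a * |a| ^ (p - 2) ≤ (p - 1) * R ^ (p - 2) * δ := by
  have hR : 0 ≤ R := le_trans (abs_nonneg a) haR
  have hq1 : (1:ℝ) ≤ p - 1 := by linarith
  have hRpow : 0 ≤ R ^ (p - 2) := Real.rpow_nonneg hR _
  have hq2 : p - 1 - 1 = p - 2 := by ring
  rcases le_or_gt L a with h | h
  · have h1 := phi_mono' hp h
    simp only at h1
    have h2 : 0 ≤ (p - 1) * R ^ (p - 2) * δ :=
      mul_nonneg (mul_nonneg (by linarith) hRpow) hδ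
    linarith
  · have hd : L - a ≤ δ := by linarith
    have key : L * |L| ^ (p - 2) - a * |a| ^ (p - 2) ≤ (p - 1) * R ^ (p - 2) * (L - a) := by
      rcases le_total 0 a with ha | ha
      · have hL : 0 ≤ L := le_trans ha h.le
        rw [phi_eq_rpow' hp ha, phi_eq_rpow' hp hL]
        have := rpow_sub_rpow_le' hq1 ha h.le (le_trans (le_abs_self L) hLR)
        rwa [hq2] at this
      · rcases le_total L 0 with hL | hL
        · rw [phi_eq_neg' hp hL, phi_eq_neg' hp ha]
          have haR' : -a ≤ R := le_trans (neg_le_abs a) haR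
          have h1 := rpow_sub_rpow_le' hq1 (neg_nonneg.2 hL) (by linarith) haR'
          rw [hq2] at h1
          have he : -a - -L = L - a := by ring
          rw [he] at h1
          linarith
        · rw [phi_eq_rpow' hp hL, phi_eq_neg' hp ha]
          have hz : (0:ℝ) ^ (p - 1) = 0 := Real.zero_rpow (by intro hc; linarith)
          have h1 := rpow_sub_rpow_le' hq1 (le_refl (0:ℝ)) hL (le_trans (le_abs_self L) hLR)
          have h2 := rpow_sub_rpow_le' hq1 (le_refl (0:ℝ)) (neg_nonneg.2 ha)
            (le_trans (neg_le_abs a) haR)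
          rw [hq2, hz] at h1 h2
          linarith
    have h3 := mul_le_mul_of_nonneg_left hd (mul_nonneg (by linarith : (0:ℝ) ≤ p - 1) hRpow)
    calc L * |L| ^ (p - 2) - a * |a| ^ (p - 2) ≤ (p - 1) * R ^ (p - 2) * (L - a) := key
      _ ≤ (p - 1) * R ^ (p - 2) * δ := by nlinarith [h3]

private lemma phi_abs' {p : ℝ} (hp : 2 ≤ p) (t : ℝ) : |t * |t| ^ (p - 2)| = |t| ^ (p - 1) := by
  rw [abs_mul, abs_of_nonneg (Real.rpow_nonneg (abs_nonneg t) _)]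
  exact phi_eq_rpow' hp (abs_nonneg t) ▸ (by rw [abs_abs])

/-! ### Polar-coordinate computations of radial lintegrals -/

private lemma lintegral_norm_polar' {n : ℕ} (hn : n ≠ 0) {g : ℝ → ℝ≥0∞} (hg : Measurable g) :
    ∫⁻ (x : EuclideanSpace ℝ (Fin n)), g ‖x‖ =
      (n : ℝ≥0∞) * volume (ball (0 : EuclideanSpace ℝ (Fin n)) 1) *
        ∫⁻ y in Ioi (0:ℝ), ENNReal.ofReal (y ^ (n - 1)) * g y := by
  haveI : Nonempty (Fin n) := ⟨⟨0, Nat.pos_of_ne_zero hn⟩⟩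
  set E := EuclideanSpace ℝ (Fin n) with hE
  set μ : Measure E := volume with hμ
  have hfr : Module.finrank ℝ E = n := finrank_euclideanSpace_fin
  have h1 : ∫⁻ x : E, g ‖x‖ ∂μ
      = ∫⁻ (x : ({0}ᶜ : Set E)), g ‖x.1‖ ∂(μ.comap Subtype.val) := by
    have h0 := setLIntegral_subtype (μ := μ) (measurableSet_singleton (0:E)).compl univ
      (fun x => g ‖x‖)
    rw [Measure.restrict_univ, image_univ, Subtype.range_coe] at h0
    rw [h0, MeasureTheory.restrict_compl_singleton]
  have h2 : ∫⁻ (x : ({0}ᶜ : Set E)), g ‖x.1‖ ∂(μ.comap Subtype.val)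
      = ∫⁻ p : (sphere (0:E) 1 × Ioi (0:ℝ)), g p.2.1
          ∂(μ.toSphere.prod (Measure.volumeIoiPow (Module.finrank ℝ E - 1))) :=
    by
      refine (lintegral_congr fun a => ?_).trans
        ((μ.measurePreserving_homeomorphUnitSphereProd).lintegral_comp
          (hg.comp (measurable_subtype_coe.comp measurable_snd)))
      simp
  have hm3 : AEMeasurable (fun p : (sphere (0:E) 1 × Ioi (0:ℝ)) => g p.2.1)
      (μ.toSphere.prod (Measure.volumeIoiPow (Module.finrank ℝ E - 1))) :=
    (hg.comp (measurable_subtype_coe.comp measurable_snd)).aemeasurable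
  have h3 : ∫⁻ p : (sphere (0:E) 1 × Ioi (0:ℝ)), g p.2.1
          ∂(μ.toSphere.prod (Measure.volumeIoiPow (Module.finrank ℝ E - 1)))
      = μ.toSphere univ *
          ∫⁻ y : Ioi (0:ℝ), g y.1 ∂(Measure.volumeIoiPow (Module.finrank ℝ E - 1)) := by
    rw [lintegral_prod _ hm3]
    simp [lintegral_const, mul_comm]
  have h4 : ∫⁻ y : Ioi (0:ℝ), g y.1 ∂(Measure.volumeIoiPow (Module.finrank ℝ E - 1))
      = ∫⁻ y in Ioi (0:ℝ), ENNReal.ofReal (y ^ (n - 1)) * g y := by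
    rw [hfr, Measure.volumeIoiPow, lintegral_withDensity_eq_lintegral_mul _
        ((measurable_subtype_coe.pow_const _).ennreal_ofReal)
        (show Measurable (fun y : Ioi (0:ℝ) => g y.1) from hg.comp measurable_subtype_coe)]
    have h0 := setLIntegral_subtype (μ := (volume : Measure ℝ)) (s := Ioi (0:ℝ))
      measurableSet_Ioi univ (fun y => ENNReal.ofReal (y ^ (n - 1)) * g y)
    rw [Measure.restrict_univ, image_univ, Subtype.range_coe] at h0
    rw [← h0]
    rfl
  rw [h1, h2, h3, h4, Measure.toSphere_apply_univ, hfr]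

private lemma lintegral_radial_set' {n : ℕ} (hn : n ≠ 0) (x : EuclideanSpace ℝ (Fin n))
    {S : Set ℝ} (hS : MeasurableSet S) {F : ℝ → ℝ≥0∞} (hF : Measurable F) :
    ∫⁻ y in {y : EuclideanSpace ℝ (Fin n) | ‖x - y‖ ∈ S}, F ‖x - y‖ =
      (n : ℝ≥0∞) * volume (ball (0 : EuclideanSpace ℝ (Fin n)) 1) *
        ∫⁻ r in Ioi (0:ℝ), ENNReal.ofReal (r ^ (n - 1)) * (S.indicator F r) := by
  have hg : Measurable (S.indicator F) := hF.indicator hS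
  have hmeas : MeasurableSet {y : EuclideanSpace ℝ (Fin n) | ‖x - y‖ ∈ S} := by
    have : Measurable fun y : EuclideanSpace ℝ (Fin n) => ‖x - y‖ :=
      (continuous_const.sub continuous_id).norm.measurable
    exact this hS
  have h1 : ∫⁻ y in {y : EuclideanSpace ℝ (Fin n) | ‖x - y‖ ∈ S}, F ‖x - y‖
      = ∫⁻ y : EuclideanSpace ℝ (Fin n), S.indicator F ‖x - y‖ := by
    rw [← lintegral_indicator hmeas]
    refine lintegral_congr fun y => ?_
    by_cases h : ‖x - y‖ ∈ S <;> simp [Set.indicator, h]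
  have h2 : ∫⁻ y : EuclideanSpace ℝ (Fin n), S.indicator F ‖x - y‖
      = ∫⁻ z : EuclideanSpace ℝ (Fin n), S.indicator F ‖z‖ := by
    have := (measurePreserving_sub_left
        (volume : Measure (EuclideanSpace ℝ (Fin n))) x).lintegral_comp
      (f := fun z => S.indicator F ‖z‖) (hg.comp measurable_norm)
    simpa using this
  rw [h1, h2, lintegral_norm_polar' hn hg]

private lemma ball_eq_radial_set' {n : ℕ} (x : EuclideanSpace ℝ (Fin n)) (ρ : ℝ) :
    ball x ρ = {y : EuclideanSpace ℝ (Fin n) | ‖x - y‖ ∈ Iio ρ} := by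
  ext y; simp [mem_ball, dist_eq_norm, norm_sub_rev, Set.mem_setOf_eq]

private lemma lintegral_ball_radial' {n : ℕ} (hn : n ≠ 0) (x : EuclideanSpace ℝ (Fin n))
    {ρ α : ℝ} (hρ : 0 < ρ) (hα : 0 < α) :
    ∫⁻ y in ball x ρ, ENNReal.ofReal (‖x - y‖ ^ (α - (n:ℝ))) =
      (n : ℝ≥0∞) * volume (ball (0 : EuclideanSpace ℝ (Fin n)) 1) *
        ENNReal.ofReal (ρ ^ α / α) := by
  have hn1 : (1:ℕ) ≤ n := Nat.one_le_iff_ne_zero.2 hn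
  have hF : Measurable fun r : ℝ => ENNReal.ofReal (r ^ (α - (n:ℝ))) := by fun_prop
  rw [ball_eq_radial_set', lintegral_radial_set' hn x measurableSet_Iio hF]
  congr 1
  rw [← lintegral_indicator measurableSet_Ioi]
  have hfun : (fun r => (Ioi (0:ℝ)).indicator
        (fun r => ENNReal.ofReal (r ^ (n - 1)) *
          ((Iio ρ).indicator (fun r => ENNReal.ofReal (r ^ (α - (n:ℝ)))) r)) r)
      = fun r => (Ioo (0:ℝ) ρ).indicator (fun r => ENNReal.ofReal (r ^ (α - 1))) r := by
    funext r
    by_cases h1 : r ∈ Ioi (0:ℝ)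
    · by_cases h2 : r ∈ Iio ρ
      · have hro : r ∈ Ioo (0:ℝ) ρ := ⟨h1, h2⟩
        have hr0 : (0:ℝ) < r := h1
        rw [Set.indicator_of_mem h1, Set.indicator_of_mem h2, Set.indicator_of_mem hro,
          ← ENNReal.ofReal_mul (pow_nonneg hr0.le _)]
        congr 1
        rw [← Real.rpow_natCast r (n-1), ← Real.rpow_add hr0]
        congr 1
        rw [Nat.cast_sub hn1, Nat.cast_one]
        ring
      · have : r ∉ Ioo (0:ℝ) ρ := fun hc => h2 hc.2
        rw [Set.indicator_of_mem h1, Set.indicator_of_notMem h2,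
          Set.indicator_of_notMem this, mul_zero]
    · have : r ∉ Ioo (0:ℝ) ρ := fun hc => h1 hc.1
      rw [Set.indicator_of_notMem h1, Set.indicator_of_notMem this]
  rw [hfun, lintegral_indicator measurableSet_Ioo]
  have hInt : IntegrableOn (fun r : ℝ => r ^ (α - 1)) (Ioo (0:ℝ) ρ) := by
    rw [intervalIntegral.integrableOn_Ioo_rpow_iff hρ]; linarith
  have hnn : 0 ≤ᵐ[volume.restrict (Ioo (0:ℝ) ρ)] fun r : ℝ => r ^ (α - 1) := by
    filter_upwards [ae_restrict_mem measurableSet_Ioo] with r hr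
    exact Real.rpow_nonneg hr.1.le _
  rw [← ofReal_integral_eq_lintegral_ofReal hInt hnn]
  congr 1
  rw [← integral_Ioc_eq_integral_Ioo, ← intervalIntegral.integral_of_le hρ.le,
    integral_rpow (Or.inl (by linarith))]
  rw [show α - 1 + 1 = α by ring, Real.zero_rpow hα.ne']
  ring

private lemma compl_ball_eq_radial_set' {n : ℕ} (x : EuclideanSpace ℝ (Fin n)) (ρ : ℝ) :
    (ball x ρ)ᶜ = {y : EuclideanSpace ℝ (Fin n) | ‖x - y‖ ∈ Ici ρ} := by
  ext y; simp [mem_ball, dist_eq_norm, norm_sub_rev, Set.mem_setOf_eq, not_lt]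

private lemma lintegral_compl_ball_radial' {n : ℕ} (hn : n ≠ 0) (x : EuclideanSpace ℝ (Fin n))
    {ρ β : ℝ} (hρ : 0 < ρ) (hβ : 0 < β) :
    ∫⁻ y in (ball x ρ)ᶜ, ENNReal.ofReal (‖x - y‖ ^ (-β - (n:ℝ))) =
      (n : ℝ≥0∞) * volume (ball (0 : EuclideanSpace ℝ (Fin n)) 1) *
        ENNReal.ofReal (ρ ^ (-β) / β) := by
  have hn1 : (1:ℕ) ≤ n := Nat.one_le_iff_ne_zero.2 hn
  have hF : Measurable fun r : ℝ => ENNReal.ofReal (r ^ (-β - (n:ℝ))) := by fun_prop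
  rw [compl_ball_eq_radial_set', lintegral_radial_set' hn x measurableSet_Ici hF]
  congr 1
  rw [← lintegral_indicator measurableSet_Ioi]
  have hfun : (fun r => (Ioi (0:ℝ)).indicator
        (fun r => ENNReal.ofReal (r ^ (n - 1)) *
          ((Ici ρ).indicator (fun r => ENNReal.ofReal (r ^ (-β - (n:ℝ)))) r)) r)
      = fun r => (Ici ρ).indicator (fun r => ENNReal.ofReal (r ^ (-β - 1))) r := by
    funext r
    by_cases h2 : r ∈ Ici ρ
    · have hr0 : (0:ℝ) < r := lt_of_lt_of_le hρ h2
      rw [Set.indicator_of_mem (mem_Ioi.2 hr0), Set.indicator_of_mem h2,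
        Set.indicator_of_mem h2, ← ENNReal.ofReal_mul (pow_nonneg hr0.le _)]
      congr 1
      rw [← Real.rpow_natCast r (n-1), ← Real.rpow_add hr0]
      congr 1
      rw [Nat.cast_sub hn1, Nat.cast_one]
      ring
    · by_cases h1 : r ∈ Ioi (0:ℝ)
      · rw [Set.indicator_of_mem h1, Set.indicator_of_notMem h2,
          Set.indicator_of_notMem h2, mul_zero]
      · rw [Set.indicator_of_notMem h1, Set.indicator_of_notMem h2]
  rw [hfun, lintegral_indicator measurableSet_Ici,
    Measure.restrict_congr_set Ioi_ae_eq_Ici.symm]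
  have hInt : IntegrableOn (fun r : ℝ => r ^ (-β - 1)) (Ioi ρ) :=
    integrableOn_Ioi_rpow_of_lt (by linarith) hρ
  have hnn : 0 ≤ᵐ[volume.restrict (Ioi ρ)] fun r : ℝ => r ^ (-β - 1) := by
    filter_upwards [ae_restrict_mem measurableSet_Ioi] with r hr
    exact Real.rpow_nonneg (le_trans hρ.le hr.le) _
  rw [← ofReal_integral_eq_lintegral_ofReal hInt hnn]
  congr 1
  rw [integral_Ioi_rpow_of_lt (by linarith) hρ, show -β - 1 + 1 = -β by ring]
  rw [neg_div_neg_eq]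

/-! ### A comparison lemma between Bochner integrals and lintegrals -/

private lemma integral_le_toReal_lintegral {α : Type*} [MeasurableSpace α] {μ : Measure α}
    {f : α → ℝ} (hf : Integrable f μ) {G : α → ℝ≥0∞}
    (hfG : ∀ᵐ y ∂μ, ENNReal.ofReal (f y) ≤ G y) (hG : ∫⁻ y, G y ∂μ ≠ ⊤) :
    ∫ y, f y ∂μ ≤ (∫⁻ y, G y ∂μ).toReal := by
  have h1 : ∫ y, f y ∂μ ≤ ∫ y, max (f y) 0 ∂μ :=
    integral_mono hf hf.pos_part (fun y => le_max_left _ _)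
  have h2 : ∫ y, max (f y) 0 ∂μ = (∫⁻ y, ENNReal.ofReal (max (f y) 0) ∂μ).toReal :=
    integral_eq_lintegral_of_nonneg_ae (Filter.Eventually.of_forall fun y => le_max_right _ _)
      hf.pos_part.aestronglyMeasurable
  have h3 : ∫⁻ y, ENNReal.ofReal (max (f y) 0) ∂μ ≤ ∫⁻ y, G y ∂μ := by
    refine lintegral_mono_ae ?_
    filter_upwards [hfG] with y hy
    rcases le_total (f y) 0 with h | h
    · simp [max_eq_right h]
    · rwa [max_eq_left h]
  calc ∫ y, f y ∂μ ≤ ∫ y, max (f y) 0 ∂μ := h1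
    _ = (∫⁻ y, ENNReal.ofReal (max (f y) 0) ∂μ).toReal := h2
    _ ≤ (∫⁻ y, G y ∂μ).toReal := ENNReal.toReal_mono hG h3

end AuxEstimates

set_option maxHeartbeats 1000000 in
/-- **One-sided estimate for the fractional `p`-Laplacian, `p ≥ 2`**
(Lemma A.2 of the paper). -/
theorem fracPLap_onesided_estimate
    (n : ℕ) {p : ℝ} (hp : 2 ≤ p) :
    ∃ c : ℝ, 0 < c ∧
      ∀ ρ s : ℝ, 0 < ρ → s ∈ Set.Ioo (0 : ℝ) 1 →
        ∀ ψ : EuclideanSpace ℝ (Fin n) → ℝ,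
          MeasureTheory.MemLp ψ ⊤ (volume : Measure (EuclideanSpace ℝ (Fin n))) →
          Continuous ψ →
          ∀ x Sx : EuclideanSpace ℝ (Fin n), ∀ K Ct : ℝ, 0 < K → 0 < Ct →
            (∀ y ∈ Metric.ball x ρ, |ψ x - ψ y| ≤ K * ‖x - y‖) →
            (∀ y ∈ Metric.ball x ρ,
              ψ y - ψ x - (inner ℝ Sx (y - x) : ℝ) ≤ Ct * ‖x - y‖ ^ 2) →
            -(fracPLap n s p ψ x) ≤
              c / (s * (1 - s)) *
                (Ct * (max ‖Sx‖ K) ^ (p - 2) * ρ ^ (-(s * p) + p) +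
                  (eLpNorm ψ ⊤ (volume : Measure (EuclideanSpace ℝ (Fin n)))).toReal ^ (p - 1) *
                    ρ ^ (-(s * p))) := by
  classical
  refine ⟨(2:ℝ) ^ (p - 1) *
      ((n : ℝ) * (volume (Metric.ball (0 : EuclideanSpace ℝ (Fin n)) 1)).toReal + 1), ?_, ?_⟩
  · have h1 : (0:ℝ) < (2:ℝ) ^ (p - 1) := Real.rpow_pos_of_pos two_pos _
    have h2 : (0:ℝ) ≤ (n : ℝ) * (volume (Metric.ball (0 : EuclideanSpace ℝ (Fin n)) 1)).toReal :=
      mul_nonneg (Nat.cast_nonneg n) ENNReal.toReal_nonneg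
    nlinarith
  intro ρ s hρ hs ψ hψLp hψc x Sx K Ct hK hCt hLip hSemi
  set Vn : ℝ := (volume (Metric.ball (0 : EuclideanSpace ℝ (Fin n)) 1)).toReal with hVn
  set c : ℝ := (2:ℝ) ^ (p - 1) * ((n : ℝ) * Vn + 1) with hc
  have hs0 : 0 < s := hs.1
  have hs1 : s < 1 := hs.2
  have hp0 : (0:ℝ) < p := by linarith
  have hden : 0 < s * (1 - s) := mul_pos hs0 (by linarith)
  have hVn0 : 0 ≤ Vn := ENNReal.toReal_nonneg
  have hX0 : 0 ≤ (n : ℝ) * Vn := mul_nonneg (Nat.cast_nonneg n) hVn0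
  have h2p1 : (1:ℝ) ≤ (2:ℝ) ^ (p - 1) := Real.one_le_rpow one_le_two (by linarith)
  have h2p0 : (0:ℝ) < (2:ℝ) ^ (p - 1) := Real.rpow_pos_of_pos two_pos _
  have hc0 : 0 < c := by rw [hc]; nlinarith
  have hmaxK : 0 < max ‖Sx‖ K := lt_of_lt_of_le hK (le_max_right _ _)
  have hsp : 0 < s * p := mul_pos hs0 hp0
  have hα : 0 < p - s * p := by nlinarith
  set M : ℝ := (eLpNorm ψ ⊤ (volume : Measure (EuclideanSpace ℝ (Fin n)))).toReal with hM
  have hM0 : 0 ≤ M := ENNReal.toReal_nonneg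
  have hRHS : 0 ≤ c / (s * (1 - s)) *
      (Ct * (max ‖Sx‖ K) ^ (p - 2) * ρ ^ (-(s * p) + p) + M ^ (p - 1) * ρ ^ (-(s * p))) := by
    apply mul_nonneg (div_nonneg hc0.le hden.le)
    apply add_nonneg
    · exact mul_nonneg (mul_nonneg hCt.le (Real.rpow_nonneg hmaxK.le _))
        (Real.rpow_nonneg hρ.le _)
    · exact mul_nonneg (Real.rpow_nonneg hM0 _) (Real.rpow_nonneg hρ.le _)
  rcases eq_or_ne n 0 with hn | hn
  · subst hn
    haveI : Subsingleton (EuclideanSpace ℝ (Fin 0)) :=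
      ⟨fun a b => by ext i; exact Fin.elim0 i⟩
    have h0 : fracPLap 0 s p ψ x = 0 := by
      simp only [fracPLap]
      refine MeasureTheory.integral_eq_zero_of_ae (Filter.Eventually.of_forall fun y => ?_)
      rw [Subsingleton.elim y x]
      simp
    rw [h0, neg_zero]
    exact hRHS
  set f : EuclideanSpace ℝ (Fin n) → ℝ := fun y =>
    (ψ x - ψ y) * |ψ x - ψ y| ^ (p - 2) / ‖x - y‖ ^ ((n : ℝ) + s * p) with hf
  have hfrac : fracPLap n s p ψ x = ∫ y, f y := rfl
  by_cases hint : MeasureTheory.Integrable f (volume : Measure (EuclideanSpace ℝ (Fin n)))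
  swap
  · rw [hfrac, MeasureTheory.integral_undef hint, neg_zero]
    exact hRHS
  -- global bound on ψ
  have hψbd : ∀ z, |ψ z| ≤ M := by
    have hae : ∀ᵐ z ∂(volume : Measure (EuclideanSpace ℝ (Fin n))), |ψ z| ≤ M := by
      filter_upwards [MeasureTheory.ae_le_eLpNormEssSup (f := ψ)
        (μ := (volume : Measure (EuclideanSpace ℝ (Fin n))))] with z hz
      have h1 : (‖ψ z‖₊ : ℝ≥0∞) ≤ eLpNorm ψ ⊤ (volume : Measure (EuclideanSpace ℝ (Fin n))) := by
        rwa [MeasureTheory.eLpNorm_exponent_top]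
      have h2 := ENNReal.toReal_mono hψLp.2.ne h1
      rw [hM]
      simpa [Real.norm_eq_abs] using h2
    by_contra hcon
    push_neg at hcon
    obtain ⟨z, hz⟩ := hcon
    have hU : IsOpen {w : EuclideanSpace ℝ (Fin n) | M < |ψ w|} :=
      isOpen_lt continuous_const hψc.abs
    have hU0 : volume {w : EuclideanSpace ℝ (Fin n) | M < |ψ w|} = 0 := by
      rw [MeasureTheory.ae_iff] at hae
      simpa [not_le] using hae
    have hemp := hU.eq_empty_of_measure_zero hU0
    rw [Set.eq_empty_iff_forall_notMem] at hemp
    exact hemp z hz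
  set B := Metric.ball x ρ with hB
  have hBmeas : MeasurableSet B := by rw [hB]; exact measurableSet_ball
  set τ : EuclideanSpace ℝ (Fin n) → EuclideanSpace ℝ (Fin n) := fun y => (x + x) - y with hτ
  have hτmp : MeasureTheory.MeasurePreserving τ volume volume :=
    MeasureTheory.Measure.measurePreserving_sub_left volume (x + x)
  have hτemb : MeasurableEmbedding τ := (Homeomorph.subLeft (x + x)).measurableEmbedding
  have hnormτ : ∀ y, ‖τ y - x‖ = ‖y - x‖ := by
    intro y
    have h1 : τ y - x = -(y - x) := by simp only [hτ]; abel
    rw [h1, norm_neg]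
  have hnτ : ∀ y, ‖x - τ y‖ = ‖x - y‖ := by
    intro y
    rw [norm_sub_rev, hnormτ y, norm_sub_rev]
  have hτball : ∀ y ∈ B, τ y ∈ B := by
    intro y hy
    rw [hB, Metric.mem_ball, dist_eq_norm] at hy ⊢
    rwa [hnormτ y]
  have hτpre : τ ⁻¹' B = B := by
    ext y
    simp only [Set.mem_preimage, hB, Metric.mem_ball, dist_eq_norm, hnormτ y]
  have hfB : MeasureTheory.IntegrableOn f B := hint.integrableOn
  have hfτB : MeasureTheory.IntegrableOn (f ∘ τ) B := by
    have h5 := hτmp.restrict_preimage_emb hτemb B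
    rw [hτpre] at h5
    exact (h5.integrable_comp_emb hτemb).2 hfB
  have hfτB' : MeasureTheory.IntegrableOn (fun y => f (τ y)) B := hfτB
  have hrefl : ∫ y in B, f (τ y) = ∫ y in B, f y := by
    have h6 := hτmp.setIntegral_preimage_emb hτemb f B
    rwa [hτpre] at h6
  set CC : ℝ := (p - 1) * (max ‖Sx‖ K) ^ (p - 2) * Ct with hCC
  have hCC0 : 0 ≤ CC := by
    rw [hCC]
    exact mul_nonneg (mul_nonneg (by linarith) (Real.rpow_nonneg hmaxK.le _)) hCt.le
  -- pointwise inner estimate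
  have claim : ∀ y ∈ B, -(f y + f (τ y)) / 2 ≤ CC * ‖x - y‖ ^ (p - s * p - (n:ℝ)) := by
    intro y hy
    by_cases hyx : y = x
    · rw [hyx]
      have hτx : τ x = x := by simp only [hτ]; abel
      have hfx : f x = 0 := by simp only [hf]; simp
      rw [hτx, hfx]
      have h0 : (0:ℝ) ≤ CC * ‖x - x‖ ^ (p - s * p - (n:ℝ)) :=
        mul_nonneg hCC0 (Real.rpow_nonneg (norm_nonneg _) _)
      linarith
    · have hxy : x - y ≠ 0 := fun hcon => hyx (sub_eq_zero.1 hcon).symm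
      have hr0 : 0 < ‖x - y‖ := norm_pos_iff.2 hxy
      have hD0 : 0 < ‖x - y‖ ^ ((n:ℝ) + s * p) := Real.rpow_pos_of_pos hr0 _
      have hτy : τ y ∈ B := hτball y hy
      have hδ0 : 0 ≤ Ct * ‖x - y‖ ^ 2 := by positivity
      have hA1 : |ψ x - ψ y| ≤ max ‖Sx‖ K * ‖x - y‖ :=
        le_trans (hLip y hy) (mul_le_mul_of_nonneg_right (le_max_right _ _) (norm_nonneg _))
      have hA2 : |ψ x - ψ (τ y)| ≤ max ‖Sx‖ K * ‖x - y‖ := by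
        refine le_trans (hLip (τ y) hτy) ?_
        rw [hnτ y]
        exact mul_le_mul_of_nonneg_right (le_max_right _ _) (norm_nonneg _)
      have hL : |(inner ℝ Sx (y - x) : ℝ)| ≤ max ‖Sx‖ K * ‖x - y‖ := by
        refine le_trans (abs_real_inner_le_norm Sx (y - x)) ?_
        rw [norm_sub_rev y x]
        exact mul_le_mul_of_nonneg_right (le_max_left _ _) (norm_nonneg _)
      have hq1 := hSemi y hy
      have hq2' := hSemi (τ y) hτy
      have hτsub : τ y - x = -(y - x) := by simp only [hτ]; abel
      have hinnerτ : (inner ℝ Sx (τ y - x) : ℝ) = -(inner ℝ Sx (y - x) : ℝ) := by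
        rw [hτsub, inner_neg_right]
      rw [hinnerτ, hnτ y] at hq2'
      have est1 := phi_sub_le' hp (a := ψ x - ψ y) (L := -(inner ℝ Sx (y - x) : ℝ))
        (R := max ‖Sx‖ K * ‖x - y‖) (δ := Ct * ‖x - y‖ ^ 2) hδ0 hA1
        (by rw [abs_neg]; exact hL) (by linarith)
      have est2 := phi_sub_le' hp (a := ψ x - ψ (τ y)) (L := (inner ℝ Sx (y - x) : ℝ))
        (R := max ‖Sx‖ K * ‖x - y‖) (δ := Ct * ‖x - y‖ ^ 2) hδ0 hA2 hL (by linarith)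
      have hodd : (-(inner ℝ Sx (y - x) : ℝ)) * |(-(inner ℝ Sx (y - x) : ℝ))| ^ (p - 2)
          = -((inner ℝ Sx (y - x) : ℝ) * |(inner ℝ Sx (y - x) : ℝ)| ^ (p - 2)) := by
        rw [abs_neg]; ring
      have hsum : -((ψ x - ψ y) * |ψ x - ψ y| ^ (p - 2)
            + (ψ x - ψ (τ y)) * |ψ x - ψ (τ y)| ^ (p - 2))
          ≤ 2 * ((p - 1) * (max ‖Sx‖ K * ‖x - y‖) ^ (p - 2) * (Ct * ‖x - y‖ ^ 2)) := by
        linarith [est1, est2, hodd]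
      have hfy : f y = (ψ x - ψ y) * |ψ x - ψ y| ^ (p - 2) / ‖x - y‖ ^ ((n:ℝ) + s * p) := rfl
      have hfty : f (τ y)
          = (ψ x - ψ (τ y)) * |ψ x - ψ (τ y)| ^ (p - 2) / ‖x - y‖ ^ ((n:ℝ) + s * p) := by
        have : f (τ y)
            = (ψ x - ψ (τ y)) * |ψ x - ψ (τ y)| ^ (p - 2) / ‖x - τ y‖ ^ ((n:ℝ) + s * p) := rfl
        rw [this, hnτ y]
      have e1 : (p - 1) * (max ‖Sx‖ K * ‖x - y‖) ^ (p - 2) * (Ct * ‖x - y‖ ^ 2)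
          / ‖x - y‖ ^ ((n:ℝ) + s * p) = CC * ‖x - y‖ ^ (p - s * p - (n:ℝ)) := by
        rw [div_eq_iff hD0.ne']
        have hr2 : ‖x - y‖ ^ (2:ℕ) = ‖x - y‖ ^ (2:ℝ) := (Real.rpow_natCast _ 2).symm
        have eA : ‖x - y‖ ^ (p - s * p - (n:ℝ)) * ‖x - y‖ ^ ((n:ℝ) + s * p)
            = ‖x - y‖ ^ p := by
          rw [← Real.rpow_add hr0]; congr 1; ring
        have eB : ‖x - y‖ ^ (p - 2) * ‖x - y‖ ^ (2:ℝ) = ‖x - y‖ ^ p := by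
          rw [← Real.rpow_add hr0]; congr 1; ring
        calc (p - 1) * (max ‖Sx‖ K * ‖x - y‖) ^ (p - 2) * (Ct * ‖x - y‖ ^ 2)
            = CC * (‖x - y‖ ^ (p - 2) * ‖x - y‖ ^ (2:ℝ)) := by
              rw [Real.mul_rpow hmaxK.le hr0.le, hr2, hCC]; ring
          _ = CC * ‖x - y‖ ^ p := by rw [eB]
          _ = CC * (‖x - y‖ ^ (p - s * p - (n:ℝ)) * ‖x - y‖ ^ ((n:ℝ) + s * p)) := by rw [eA]
          _ = CC * ‖x - y‖ ^ (p - s * p - (n:ℝ)) * ‖x - y‖ ^ ((n:ℝ) + s * p) := by ring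
      rw [hfy, hfty]
      have h2D : (0:ℝ) < 2 * ‖x - y‖ ^ ((n:ℝ) + s * p) := by linarith
      calc -((ψ x - ψ y) * |ψ x - ψ y| ^ (p - 2) / ‖x - y‖ ^ ((n:ℝ) + s * p)
              + (ψ x - ψ (τ y)) * |ψ x - ψ (τ y)| ^ (p - 2) / ‖x - y‖ ^ ((n:ℝ) + s * p)) / 2
          = -((ψ x - ψ y) * |ψ x - ψ y| ^ (p - 2)
              + (ψ x - ψ (τ y)) * |ψ x - ψ (τ y)| ^ (p - 2)) / (2 * ‖x - y‖ ^ ((n:ℝ) + s * p)) := by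
            rw [← add_div, ← neg_div, div_div,
              mul_comm (‖x - y‖ ^ ((n:ℝ) + s * p)) 2]
        _ ≤ 2 * ((p - 1) * (max ‖Sx‖ K * ‖x - y‖) ^ (p - 2) * (Ct * ‖x - y‖ ^ 2))
              / (2 * ‖x - y‖ ^ ((n:ℝ) + s * p)) := by
            exact (div_le_div_iff_of_pos_right h2D).2 hsum
        _ = (p - 1) * (max ‖Sx‖ K * ‖x - y‖) ^ (p - 2) * (Ct * ‖x - y‖ ^ 2)
              / ‖x - y‖ ^ ((n:ℝ) + s * p) := by
            rw [mul_div_mul_left _ _ (two_ne_zero)]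
        _ = CC * ‖x - y‖ ^ (p - s * p - (n:ℝ)) := e1
  -- lintegral of the inner majorant
  have hG1 : ∫⁻ y in B, ENNReal.ofReal (CC * ‖x - y‖ ^ (p - s * p - (n:ℝ)))
      = ENNReal.ofReal CC *
          ((n : ℝ≥0∞) * volume (Metric.ball (0 : EuclideanSpace ℝ (Fin n)) 1) *
            ENNReal.ofReal (ρ ^ (p - s * p) / (p - s * p))) := by
    simp_rw [ENNReal.ofReal_mul hCC0]
    rw [MeasureTheory.lintegral_const_mul' _ _ ENNReal.ofReal_ne_top, hB,
      lintegral_ball_radial' hn x hρ hα]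
  have hG1fin : ∫⁻ y in B, ENNReal.ofReal (CC * ‖x - y‖ ^ (p - s * p - (n:ℝ))) ≠ ⊤ := by
    rw [hG1]
    exact ENNReal.mul_ne_top ENNReal.ofReal_ne_top
      (ENNReal.mul_ne_top (ENNReal.mul_ne_top (ENNReal.natCast_ne_top n)
        measure_ball_lt_top.ne) ENNReal.ofReal_ne_top)
  have hInner : -∫ y in B, f y ≤
      (ENNReal.ofReal CC *
        ((n : ℝ≥0∞) * volume (Metric.ball (0 : EuclideanSpace ℝ (Fin n)) 1) *
          ENNReal.ofReal (ρ ^ (p - s * p) / (p - s * p)))).toReal := by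
    have hintB : MeasureTheory.Integrable (fun y => -(f y + f (τ y)) / 2)
        (volume.restrict B) := ((hfB.add hfτB').neg).div_const 2
    have hmono : ∀ᵐ y ∂(volume.restrict B),
        ENNReal.ofReal (-(f y + f (τ y)) / 2)
          ≤ ENNReal.ofReal (CC * ‖x - y‖ ^ (p - s * p - (n:ℝ))) := by
      filter_upwards [MeasureTheory.ae_restrict_mem
        hBmeas] with y hy
      exact ENNReal.ofReal_le_ofReal (claim y hy)
    have h7 := integral_le_toReal_lintegral hintB hmono hG1fin
    have h8 : ∫ y in B, (-(f y + f (τ y)) / 2) = -∫ y in B, f y := by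
      rw [MeasureTheory.integral_div]
      rw [MeasureTheory.integral_neg]
      rw [MeasureTheory.integral_add hfB hfτB', hrefl]
      ring
    rw [h8] at h7
    rw [hG1] at h7
    exact h7
  -- pointwise tail estimate
  have claim2 : ∀ y ∈ Bᶜ, -(f y) ≤ (2 * M) ^ (p - 1) * ‖x - y‖ ^ (-(s * p) - (n:ℝ)) := by
    intro y hy
    have hry : ρ ≤ ‖x - y‖ := by
      rw [hB] at hy
      simp only [Set.mem_compl_iff, Metric.mem_ball, dist_eq_norm, not_lt] at hy
      rwa [norm_sub_rev]
    have hr0 : 0 < ‖x - y‖ := lt_of_lt_of_le hρ hry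
    have hD0 : 0 < ‖x - y‖ ^ ((n:ℝ) + s * p) := Real.rpow_pos_of_pos hr0 _
    have habs : |ψ x - ψ y| ≤ 2 * M := by
      have h1 := abs_sub (ψ x) (ψ y)
      linarith [hψbd x, hψbd y]
    calc -(f y) ≤ |f y| := neg_le_abs _
      _ = |ψ x - ψ y| ^ (p - 1) / ‖x - y‖ ^ ((n:ℝ) + s * p) := by
          rw [show f y = (ψ x - ψ y) * |ψ x - ψ y| ^ (p - 2)
              / ‖x - y‖ ^ ((n:ℝ) + s * p) from rfl]
          rw [abs_div, abs_of_nonneg (Real.rpow_nonneg (norm_nonneg _) _), phi_abs' hp]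
      _ ≤ (2 * M) ^ (p - 1) / ‖x - y‖ ^ ((n:ℝ) + s * p) := by
          exact (div_le_div_iff_of_pos_right hD0).2
            (Real.rpow_le_rpow (abs_nonneg _) habs (by linarith))
      _ = (2 * M) ^ (p - 1) * ‖x - y‖ ^ (-(s * p) - (n:ℝ)) := by
          rw [div_eq_mul_inv, ← Real.rpow_neg (norm_nonneg _)]
          congr 1
          ring
  have h2M0 : (0:ℝ) ≤ (2 * M) ^ (p - 1) := Real.rpow_nonneg (by linarith) _
  have hG2 : ∫⁻ y in Bᶜ, ENNReal.ofReal ((2 * M) ^ (p - 1) * ‖x - y‖ ^ (-(s * p) - (n:ℝ)))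
      = ENNReal.ofReal ((2 * M) ^ (p - 1)) *
          ((n : ℝ≥0∞) * volume (Metric.ball (0 : EuclideanSpace ℝ (Fin n)) 1) *
            ENNReal.ofReal (ρ ^ (-(s * p)) / (s * p))) := by
    simp_rw [ENNReal.ofReal_mul h2M0]
    rw [MeasureTheory.lintegral_const_mul' _ _ ENNReal.ofReal_ne_top, hB,
      lintegral_compl_ball_radial' hn x hρ hsp]
  have hG2fin : ∫⁻ y in Bᶜ,
      ENNReal.ofReal ((2 * M) ^ (p - 1) * ‖x - y‖ ^ (-(s * p) - (n:ℝ))) ≠ ⊤ := by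
    rw [hG2]
    exact ENNReal.mul_ne_top ENNReal.ofReal_ne_top
      (ENNReal.mul_ne_top (ENNReal.mul_ne_top (ENNReal.natCast_ne_top n)
        measure_ball_lt_top.ne) ENNReal.ofReal_ne_top)
  have hTail : -∫ y in Bᶜ, f y ≤
      (ENNReal.ofReal ((2 * M) ^ (p - 1)) *
        ((n : ℝ≥0∞) * volume (Metric.ball (0 : EuclideanSpace ℝ (Fin n)) 1) *
          ENNReal.ofReal (ρ ^ (-(s * p)) / (s * p)))).toReal := by
    have hintBc : MeasureTheory.Integrable (fun y => -(f y)) (volume.restrict Bᶜ) :=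
      (hint.neg).integrableOn
    have hmono2 : ∀ᵐ y ∂(volume.restrict Bᶜ),
        ENNReal.ofReal (-(f y))
          ≤ ENNReal.ofReal ((2 * M) ^ (p - 1) * ‖x - y‖ ^ (-(s * p) - (n:ℝ))) := by
      filter_upwards [MeasureTheory.ae_restrict_mem
        hBmeas.compl] with y hy
      exact ENNReal.ofReal_le_ofReal (claim2 y hy)
    have h9 := integral_le_toReal_lintegral hintBc hmono2 hG2fin
    rw [MeasureTheory.integral_neg] at h9
    rw [hG2] at h9
    exact h9
  -- put the two pieces together
  have hsplit : (∫ y in B, f y) + ∫ y in Bᶜ, f y = ∫ y, f y :=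
    MeasureTheory.integral_add_compl hBmeas hint
  have hT1r : (ENNReal.ofReal CC *
      ((n : ℝ≥0∞) * volume (Metric.ball (0 : EuclideanSpace ℝ (Fin n)) 1) *
        ENNReal.ofReal (ρ ^ (p - s * p) / (p - s * p)))).toReal
      = CC * ((n:ℝ) * Vn * (ρ ^ (p - s * p) / (p - s * p))) := by
    rw [ENNReal.toReal_mul, ENNReal.toReal_mul, ENNReal.toReal_mul,
      ENNReal.toReal_ofReal hCC0,
      ENNReal.toReal_ofReal (div_nonneg (Real.rpow_nonneg hρ.le _) hα.le), hVn]
    simp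
  have hT2r : (ENNReal.ofReal ((2 * M) ^ (p - 1)) *
      ((n : ℝ≥0∞) * volume (Metric.ball (0 : EuclideanSpace ℝ (Fin n)) 1) *
        ENNReal.ofReal (ρ ^ (-(s * p)) / (s * p)))).toReal
      = (2 * M) ^ (p - 1) * ((n:ℝ) * Vn * (ρ ^ (-(s * p)) / (s * p))) := by
    rw [ENNReal.toReal_mul, ENNReal.toReal_mul, ENNReal.toReal_mul,
      ENNReal.toReal_ofReal h2M0,
      ENNReal.toReal_ofReal (div_nonneg (Real.rpow_nonneg hρ.le _) hsp.le), hVn]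
    simp
  -- final numeric comparison
  have hq1 : (p - 1) * ((n:ℝ) * Vn) / (p - s * p) ≤ c / (s * (1 - s)) := by
    rw [div_le_div_iff₀ hα hden]
    have hc1 : (n:ℝ) * Vn ≤ c := by rw [hc]; nlinarith
    have hh1 : (0:ℝ) ≤ (p - 1) * (1 - s) := by
      apply mul_nonneg <;> linarith
    have hh2 : (0:ℝ) ≤ p - (p - 1) * s := by nlinarith
    nlinarith [mul_nonneg (sub_nonneg.2 hc1) hα.le,
      mul_nonneg (mul_nonneg hX0 (by linarith : (0:ℝ) ≤ 1 - s)) hh2]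
  have hcY : (2:ℝ) ^ (p - 1) * ((n:ℝ) * Vn) ≤ c := by
    rw [hc]; nlinarith
  have hY0 : (0:ℝ) ≤ (2:ℝ) ^ (p - 1) * ((n:ℝ) * Vn) := mul_nonneg h2p0.le hX0
  have hq2 : (2:ℝ) ^ (p - 1) * ((n:ℝ) * Vn) / (s * p) ≤ c / (s * (1 - s)) := by
    rw [div_le_div_iff₀ hsp hden]
    nlinarith [mul_nonneg (mul_nonneg hs0.le hp0.le) (sub_nonneg.2 hcY),
      mul_nonneg (mul_nonneg hs0.le hY0) (by linarith : (0:ℝ) ≤ p - 1 + s)]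
  have key1 : CC * ((n:ℝ) * Vn * (ρ ^ (p - s * p) / (p - s * p)))
      ≤ c / (s * (1 - s)) * (Ct * (max ‖Sx‖ K) ^ (p - 2) * ρ ^ (p - s * p)) := by
    have e : CC * ((n:ℝ) * Vn * (ρ ^ (p - s * p) / (p - s * p)))
        = ((p - 1) * ((n:ℝ) * Vn) / (p - s * p))
            * (Ct * (max ‖Sx‖ K) ^ (p - 2) * ρ ^ (p - s * p)) := by
      rw [hCC]; ring
    rw [e]
    exact mul_le_mul_of_nonneg_right hq1
      (mul_nonneg (mul_nonneg hCt.le (Real.rpow_nonneg hmaxK.le _)) (Real.rpow_nonneg hρ.le _))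
  have key2 : (2 * M) ^ (p - 1) * ((n:ℝ) * Vn * (ρ ^ (-(s * p)) / (s * p)))
      ≤ c / (s * (1 - s)) * (M ^ (p - 1) * ρ ^ (-(s * p))) := by
    have e : (2 * M) ^ (p - 1) * ((n:ℝ) * Vn * (ρ ^ (-(s * p)) / (s * p)))
        = ((2:ℝ) ^ (p - 1) * ((n:ℝ) * Vn) / (s * p)) * (M ^ (p - 1) * ρ ^ (-(s * p))) := by
      rw [Real.mul_rpow (by norm_num : (0:ℝ) ≤ 2) hM0]; ring
    rw [e]
    exact mul_le_mul_of_nonneg_right hq2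
      (mul_nonneg (Real.rpow_nonneg hM0 _) (Real.rpow_nonneg hρ.le _))
  rw [show -(s * p) + p = p - s * p from by ring, hfrac]
  calc -∫ y, f y = (-∫ y in B, f y) + (-∫ y in Bᶜ, f y) := by rw [← hsplit]; ring
    _ ≤ CC * ((n:ℝ) * Vn * (ρ ^ (p - s * p) / (p - s * p)))
          + (2 * M) ^ (p - 1) * ((n:ℝ) * Vn * (ρ ^ (-(s * p)) / (s * p))) := by
        have hi := hInner
        have ht := hTail
        rw [hT1r] at hi
        rw [hT2r] at ht
        exact add_le_add hi ht
    _ ≤ c / (s * (1 - s)) * (Ct * (max ‖Sx‖ K) ^ (p - 2) * ρ ^ (p - s * p))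
          + c / (s * (1 - s)) * (M ^ (p - 1) * ρ ^ (-(s * p))) := add_le_add key1 key2
    _ = c / (s * (1 - s)) *
          (Ct * (max ‖Sx‖ K) ^ (p - 2) * ρ ^ (p - s * p) + M ^ (p - 1) * ρ ^ (-(s * p))) :=
        (mul_add _ _ _).symm
end

section
/- Let p ∈ (1,2). Then for all real numbers a and b with |a| ≤ 2 and |b| ≤ 2 one has (3p(p−1)/4^{4−p})·(a−b)² + |a|^p − |b|^p ≤ p·a·|a|^{p−2}·(a−b), where a·|a|^{p−2} is understood to equal 0 when a = 0. -/
open MeasureTheory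
open scoped ENNReal NNReal

section ElemAux
open Real Set
lemma aux_abs_rpow_deriv {p : ℝ} (hp1 : 1 < p) (t : ℝ) :
    HasDerivAt (fun x : ℝ => |x| ^ p) (p * (t * |t| ^ (p - 2))) t := by
  rcases lt_trichotomy t 0 with ht | rfl | ht
  · have h1 : HasDerivAt (fun x : ℝ => (-x) ^ p) (p * (-t) ^ (p - 1) * -1) t :=
      (Real.hasDerivAt_rpow_const (x := -t) (p := p) (Or.inl (by linarith))).comp t
        (hasDerivAt_neg t)
    have h2 : p * (-t) ^ (p - 1) * -1 = p * (t * |t| ^ (p - 2)) := by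
      rw [abs_of_neg ht, show p - 1 = (p - 2) + 1 by ring,
        Real.rpow_add_one (by linarith : (-t) ≠ 0)]
      ring
    rw [h2] at h1
    apply h1.congr_of_eventuallyEq
    filter_upwards [gt_mem_nhds ht] with x hx
    rw [abs_of_neg hx]
  · have h0 : |(0:ℝ)| ^ p = 0 := by
      simp [Real.zero_rpow (by linarith : p ≠ 0)]
    rw [show p * ((0:ℝ) * |(0:ℝ)| ^ (p - 2)) = 0 by ring]
    rw [hasDerivAt_iff_tendsto_slope]
    apply squeeze_zero_norm' (a := fun x : ℝ => |x| ^ (p - 1))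
    · filter_upwards [self_mem_nhdsWithin] with x hx
      have hax : (0:ℝ) < |x| := abs_pos.mpr hx
      rw [slope_def_field, h0, sub_zero, sub_zero, Real.norm_eq_abs, abs_div,
        abs_of_nonneg (Real.rpow_nonneg (abs_nonneg x) p),
        Real.rpow_sub hax, Real.rpow_one]
    · have hc : ContinuousAt (fun x : ℝ => |x| ^ (p - 1)) 0 :=
        (Real.continuousAt_rpow_const _ _ (Or.inr (by linarith))).comp
          continuous_abs.continuousAt
      have := hc.tendsto.mono_left (nhdsWithin_le_nhds (s := {(0:ℝ)}ᶜ))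
      simpa [Real.zero_rpow (show p - 1 ≠ 0 by intro h; linarith)] using this
  · have h1 : HasDerivAt (fun x : ℝ => x ^ p) (p * t ^ (p - 1)) t :=
      Real.hasDerivAt_rpow_const (Or.inl (by linarith))
    have h2 : p * t ^ (p - 1) = p * (t * |t| ^ (p - 2)) := by
      rw [abs_of_pos ht, show p - 1 = (p - 2) + 1 by ring,
        Real.rpow_add_one (by linarith : t ≠ 0)]
      ring
    rw [h2] at h1
    apply h1.congr_of_eventuallyEq
    filter_upwards [lt_mem_nhds ht] with x hx
    rw [abs_of_pos hx]

lemma aux_key {p : ℝ} (hp1 : 1 < p) (hp2 : p < 2) {x y : ℝ}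
    (hx : 0 ≤ x) (hxy : x ≤ y) (hy : y ≤ 2) :
    (p - 1) * 2 ^ (p - 2) * (y - x) ≤ y ^ (p - 1) - x ^ (p - 1) := by
  rcases eq_or_lt_of_le hxy with rfl | hlt
  · simp
  have hy0 : 0 < y := lt_of_le_of_lt hx hlt
  rcases eq_or_lt_of_le hx with rfl | hx0
  · rw [Real.zero_rpow (by linarith : p - 1 ≠ 0), sub_zero, sub_zero]
    have h1 : (2:ℝ) ^ (p - 2) ≤ y ^ (p - 2) :=
      Real.rpow_le_rpow_of_nonpos hy0 hy (by linarith)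
    have h2 : y ^ (p - 2) * y = y ^ (p - 1) := by
      rw [← Real.rpow_add_one (ne_of_gt hy0)]; ring_nf
    have h3 : (0:ℝ) < (2:ℝ) ^ (p - 2) := Real.rpow_pos_of_pos (by norm_num) _
    nlinarith [mul_le_mul_of_nonneg_right h1 hy0.le, mul_pos h3 hy0]
  · obtain ⟨ξ, hξ, hslope⟩ := exists_hasDerivAt_eq_slope (fun t => t ^ (p - 1))
      (fun t => (p - 1) * t ^ (p - 2)) hlt
      (fun t ht => (Real.continuousAt_rpow_const t (p - 1)
        (Or.inl (by intro h; rw [h] at ht; exact absurd ht.1 (by linarith)))).continuousWithinAt)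
      (fun t ht => by
        have : t ≠ 0 := by intro h; rw [h] at ht; exact absurd ht.1 (by linarith)
        have h := Real.hasDerivAt_rpow_const (x := t) (p := p - 1) (Or.inl this)
        rw [show p - 1 - 1 = p - 2 from by ring] at h
        exact h)
    have hξ0 : 0 < ξ := lt_trans hx0 hξ.1
    have hξ2 : ξ ≤ 2 := le_trans (le_of_lt hξ.2) hy
    have h1 : (2:ℝ) ^ (p - 2) ≤ ξ ^ (p - 2) :=
      Real.rpow_le_rpow_of_nonpos hξ0 hξ2 (by linarith)
    have h2 : y ^ (p - 1) - x ^ (p - 1) = (p - 1) * ξ ^ (p - 2) * (y - x) :=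
      ((eq_div_iff (by intro h; rw [sub_eq_zero] at h; exact absurd h (by linarith))).mp
        hslope).symm
    rw [h2]
    have hyx : 0 < y - x := by linarith
    nlinarith [mul_le_mul_of_nonneg_right h1 hyx.le]

/-- **The elementary convexity inequality for `p ∈ (1,2)`** (formula (4.4) of
Lindqvist, as used in the proof of Theorem 1.3): for `|a|, |b| ≤ 2`,
`(3p(p-1)/4^{4-p}) (a-b)² + |a|^p - |b|^p ≤ p a|a|^{p-2} (a-b)`. -/
theorem elementary_convexity_inequality
    {p : ℝ} (hp1 : 1 < p) (hp2 : p < 2) :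
    ∀ a b : ℝ, |a| ≤ 2 → |b| ≤ 2 →
      3 * p * (p - 1) / 4 ^ (4 - p) * (a - b) ^ 2 + |a| ^ p - |b| ^ p ≤
        p * (a * |a| ^ (p - 2)) * (a - b) := by
  intro a b ha hb
  set c : ℝ := 3 * p * (p - 1) / 4 ^ (4 - p) with hc
  have hp0 : 0 < p := by linarith
  have h4pos : (0:ℝ) < 4 ^ (4 - p) := Real.rpow_pos_of_pos (by norm_num) _
  have h2pos : (0:ℝ) < (2:ℝ) ^ (p - 2) := Real.rpow_pos_of_pos (by norm_num) _
  -- 2c ≤ p(p-1)2^{p-2}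
  have h2c : 2 * c ≤ p * (p - 1) * 2 ^ (p - 2) := by
    have h6 : (6:ℝ) ≤ 4 ^ (4 - p) * 2 ^ (p - 2) := by
      have e1 : (4:ℝ) ^ (4 - p) = 2 ^ (2 * (4 - p)) := by
        rw [show (4:ℝ) = (2:ℝ) ^ (2:ℝ) by
            rw [show (2:ℝ) = ((2:ℕ):ℝ) from by norm_num, Real.rpow_natCast]; norm_num,
          ← Real.rpow_mul (by norm_num)]
      rw [e1, ← Real.rpow_add (by norm_num)]
      have : (16:ℝ) ≤ 2 ^ (2 * (4 - p) + (p - 2)) := by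
        have h16 : (16:ℝ) = (2:ℝ) ^ ((4:ℕ):ℝ) := by rw [Real.rpow_natCast]; norm_num
        rw [h16]
        exact Real.rpow_le_rpow_of_exponent_le (by norm_num) (by push_cast; linarith)
      linarith
    rw [hc, ← mul_div_assoc, div_le_iff₀ h4pos]
    nlinarith [mul_le_mul_of_nonneg_left h6 (by nlinarith : (0:ℝ) ≤ p * (p - 1))]
  have hΦ : ∀ t : ℝ, 0 ≤ t → t * |t| ^ (p - 2) = t ^ (p - 1) := by
    intro t ht
    rcases eq_or_lt_of_le ht with rfl | ht0
    · simp [Real.zero_rpow (show p - 1 ≠ 0 by intro h; linarith)]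
    · rw [abs_of_pos ht0, show p - 1 = p - 2 + 1 by ring,
        Real.rpow_add_one (ne_of_gt ht0)]; ring
  -- the step inequality for 0 ≤ x ≤ y ≤ 2
  have step : ∀ x y : ℝ, 0 ≤ x → x ≤ y → y ≤ 2 →
      2 * c * (y - x) ≤ p * (y * |y| ^ (p - 2)) - p * (x * |x| ^ (p - 2)) := by
    intro x y hx hxy hy
    rw [hΦ x hx, hΦ y (le_trans hx hxy)]
    have hk := aux_key hp1 hp2 hx hxy hy
    nlinarith [mul_le_mul_of_nonneg_right h2c (by linarith : (0:ℝ) ≤ y - x)]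
  -- monotonicity of g' on [-2,2]
  set g' : ℝ → ℝ := fun t => p * (t * |t| ^ (p - 2)) - 2 * c * t with hg'
  have hmono : ∀ x ∈ Icc (-2:ℝ) 2, ∀ y ∈ Icc (-2:ℝ) 2, x ≤ y → g' x ≤ g' y := by
    intro x hxm y hym hxy
    have key : 2 * c * (y - x) ≤ p * (y * |y| ^ (p - 2)) - p * (x * |x| ^ (p - 2)) := by
      rcases le_or_gt 0 x with hx0 | hx0
      · exact step x y hx0 hxy hym.2
      rcases le_or_gt y 0 with hy0 | hy0
      · have := step (-y) (-x) (by linarith) (by linarith)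
          (by linarith [hxm.1])
        rw [abs_neg, abs_neg] at this
        nlinarith [this]
      · have h1 := step 0 y le_rfl (le_of_lt hy0) hym.2
        have h2 := step 0 (-x) le_rfl (by linarith) (by linarith [hxm.1])
        rw [abs_neg] at h2
        simp only [abs_zero, zero_mul, mul_zero, sub_zero] at h1 h2
        nlinarith [h1, h2]
    simp only [hg']
    linarith
  -- g has derivative g'
  set g : ℝ → ℝ := fun t => |t| ^ p - c * t ^ 2 with hgdef
  have hg : ∀ t : ℝ, HasDerivAt g (g' t) t := by
    intro t
    have h1 := (aux_abs_rpow_deriv hp1 t).sub (((hasDerivAt_pow 2 t)).const_mul c)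
    convert h1 using 1
    · rfl
    · rfl
    · rfl
    simp only [hg']
    push_cast
    ring
  have hcont : ∀ s : Set ℝ, ContinuousOn g s :=
    fun s => fun t _ => (hg t).continuousAt.continuousWithinAt
  have haI : a ∈ Icc (-2:ℝ) 2 := abs_le.mp ha
  have hbI : b ∈ Icc (-2:ℝ) 2 := abs_le.mp hb
  -- tangent line inequality  g b ≥ g a + g' a * (b - a)
  have tangent : g a + g' a * (b - a) ≤ g b := by
    rcases lt_trichotomy a b with hab | rfl | hab
    · obtain ⟨ξ, hξ, hs⟩ := exists_hasDerivAt_eq_slope g g' hab (hcont _) (fun t _ => hg t)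
      have hξI : ξ ∈ Icc (-2:ℝ) 2 :=
        ⟨le_trans haI.1 (le_of_lt hξ.1), le_trans (le_of_lt hξ.2) hbI.2⟩
      have hm := hmono a haI ξ hξI (le_of_lt hξ.1)
      have heq : g b - g a = g' ξ * (b - a) :=
        ((eq_div_iff (by intro h; rw [sub_eq_zero] at h; exact absurd h (by linarith))).mp
          hs).symm
      nlinarith [mul_le_mul_of_nonneg_right hm (by linarith : (0:ℝ) ≤ b - a)]
    · simp
    · obtain ⟨ξ, hξ, hs⟩ := exists_hasDerivAt_eq_slope g g' hab (hcont _) (fun t _ => hg t)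
      have hξI : ξ ∈ Icc (-2:ℝ) 2 :=
        ⟨le_trans hbI.1 (le_of_lt hξ.1), le_trans (le_of_lt hξ.2) haI.2⟩
      have hm := hmono ξ hξI a haI (le_of_lt hξ.2)
      have heq : g a - g b = g' ξ * (a - b) :=
        ((eq_div_iff (by intro h; rw [sub_eq_zero] at h; exact absurd h (by linarith))).mp
          hs).symm
      nlinarith [mul_le_mul_of_nonneg_right hm (by linarith : (0:ℝ) ≤ a - b)]
  simp only [hgdef, hg'] at tangent
  nlinarith [tangent]

end ElemAux
end
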